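/- arXiv:gr-qc/0201045 — 9 statements merged into one kernel-verified Lean document; each statement's English description precedes it below -/
import Mathlib

section
/- Let V = EuclideanSpace ℝ (Fin 2) (a 2-dimensional real topological vector space) and let B : V →ₗ[ℝ] V →ₗ[ℝ] ℝ be a symmetric bilinear form that is not identically zero. Suppose ρ : Circle →* (V ≃ₗ[ℝ] V) is a group homomorphism such that the map (z, v) ↦ ρ z v from Circle × V to V is continuous, each ρ z preserves B (i.e. B (ρ z v) (ρ z w) = B v w for all v, w ∈ V), and there exists z₀ ∈ Circle with ρ z₀ ≠ 1. Then B is definite: either B v v > 0 for every v ≠ 0, or B v v < 0 for every v ≠ 0. -/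
/-!
A non-definite nonzero form on the plane has an isotropic line that every `ρ z` preserves: in the
degenerate case it is the radical, otherwise it is one of the two null lines, and the circle, being
connected, cannot move one continuously onto the other. In a basis starting on that line all `ρ z`
are upper triangular; the diagonal entries are continuous characters of the circle into `ℝˣ` and
the corner entry is then a continuous additive character into `ℝ`, and compactness together with
connectedness makes all of them trivial.
-/

open Module Set

section Characters

variable {G : Type*} [Monoid G] [TopologicalSpace G] [CompactSpace G]

theorem eq_zero_of_continuous_of_map_mul_eq_add {f : G → ℝ} (hf : Continuous f)
    (hadd : ∀ g h, f (g * h) = f g + f h) (g : G) : f g = 0 := by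
  obtain ⟨gmax, -, hmax⟩ := isCompact_univ.exists_isMaxOn univ_nonempty hf.continuousOn
  obtain ⟨gmin, -, hmin⟩ := isCompact_univ.exists_isMinOn univ_nonempty hf.continuousOn
  have h₁ : f (gmax * gmax) ≤ f gmax := hmax (mem_univ _)
  have h₂ : f gmin ≤ f (gmin * gmin) := hmin (mem_univ _)
  have h₃ : f g ≤ f gmax := hmax (mem_univ _)
  have h₄ : f gmin ≤ f g := hmin (mem_univ _)
  rw [hadd] at h₁ h₂
  linarith

theorem eq_one_of_continuous_of_map_mul [PreconnectedSpace G] {f : G → ℝ} (hf : Continuous f)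
    (hmul : ∀ g h, f (g * h) = f g * f h) (hne : ∀ g, f g ≠ 0) (g : G) : f g = 1 := by
  have hone : f 1 = 1 := by
    simpa [hne 1] using hmul 1 1
  have hpos : 0 < f g := by
    by_contra! hneg
    obtain ⟨x, hx⟩ := intermediate_value_univ g 1 hf ⟨hneg, hone ▸ zero_le_one⟩
    exact hne x hx
  refine Real.eq_one_of_pos_of_log_eq_zero hpos ?_
  refine eq_zero_of_continuous_of_map_mul_eq_add (hf.log hne) (fun g h => ?_) g
  rw [hmul, Real.log_mul (hne g) (hne h)]

end Characters

theorem eq_one_of_continuous_of_upperTriangular {G : Type*} [Group G] [TopologicalSpace G]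
    [CompactSpace G] [PreconnectedSpace G] (M : G →* Matrix (Fin 2) (Fin 2) ℝ)
    (hM : Continuous M) (hlower : ∀ g, M g 1 0 = 0) (g : G) : M g = 1 := by
  have hentry (i j : Fin 2) : Continuous fun g => M g i j := hM.matrix_elem i j
  have hdiag_mul (i : Fin 2) (g h : G) : M (g * h) i i = M g i i * M h i i := by
    fin_cases i <;> simp [Matrix.mul_apply, Fin.sum_univ_two, hlower]
  have hdiag (i : Fin 2) : ∀ g, M g i i = 1 := by
    refine eq_one_of_continuous_of_map_mul (hentry i i) (hdiag_mul i) fun g h0 => ?_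
    simpa [h0] using hdiag_mul i g g⁻¹
  have hoff : ∀ g, M g 0 1 = 0 := by
    refine eq_zero_of_continuous_of_map_mul_eq_add (hentry 0 1) fun g h => ?_
    rw [map_mul, Matrix.mul_apply, Fin.sum_univ_two, hdiag 0 g, hdiag 1 h]
    ring
  ext i j
  fin_cases i <;> fin_cases j <;> simp [hdiag, hoff, hlower]

theorem eq_zero_of_continuous_of_mul_eq_zero {X R : Type*} [TopologicalSpace X]
    [PreconnectedSpace X] [MulZeroClass R] [NoZeroDivisors R] [TopologicalSpace R] [T2Space R]
    {f₁ f₂ : X → R}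
    (hf₁ : Continuous f₁) (hf₂ : Continuous f₂) (hmul : ∀ x, f₁ x * f₂ x = 0)
    (hne : ∀ x, f₁ x ≠ 0 ∨ f₂ x ≠ 0) {x₀ : X} (hx₀ : f₁ x₀ = 0) (x : X) : f₁ x = 0 := by
  have hzero : {x | f₁ x = 0} = {x | f₂ x ≠ 0} :=
    Set.ext fun x => ⟨fun (h : f₁ x = 0) h' => (hne x).elim (absurd h) (absurd h'),
      (mul_eq_zero.1 (hmul x)).resolve_right⟩
  have hclopen : IsClopen {x | f₁ x = 0} :=
    ⟨isClosed_eq hf₁ continuous_const, hzero ▸ isOpen_ne_fun hf₂ continuous_const⟩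
  exact eq_univ_iff_forall.1 (hclopen.eq_univ ⟨x₀, hx₀⟩) x

section Bilinear

variable {K V : Type*} [Field K] [AddCommGroup V] [Module K V]

theorem Submodule.eq_span_singleton_of_ne_top [FiniteDimensional K V] (hV : finrank K V = 2)
    {p : Submodule K V} (hp : p ≠ ⊤) {u : V} (hu : u ≠ 0) (hup : u ∈ p) : p = K ∙ u := by
  refine (eq_of_le_of_finrank_le ((span_singleton_le_iff_mem u p).2 hup) ?_).symm
  have := Submodule.finrank_lt hp
  rw [finrank_span_singleton hu]
  omega

theorem LinearMap.map_eq_zero_of_isometry (B : V →ₗ[K] V →ₗ[K] K) (T : V ≃ₗ[K] V)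
    (hT : ∀ v w, B (T v) (T w) = B v w) {v : V} (hv : B v = 0) : B (T v) = 0 := by
  ext x
  simpa [hv] using hT v (T.symm x)

theorem exists_hyperbolic_partner [NeZero (2 : K)] (B : V →ₗ[K] V →ₗ[K] K)
    (hsymm : ∀ v w, B v w = B w v) {u : V} (huu : B u u = 0) (hu : B u ≠ 0) :
    ∃ w, B u w = 1 ∧ B w w = 0 := by
  obtain ⟨w₀, hw₀⟩ : ∃ w₀, B u w₀ = 1 := by
    obtain ⟨x, hx⟩ := DFunLike.ne_iff.1 hu
    exact ⟨(B u x)⁻¹ • x, by simp_all⟩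
  refine ⟨w₀ - (B w₀ w₀ / 2) • u, by simp [hw₀, huu], ?_⟩
  simp only [map_sub, map_smul, LinearMap.sub_apply, LinearMap.smul_apply, smul_eq_mul, hw₀, huu,
    hsymm w₀ u]
  field_simp
  ring

theorem eq_smul_add_smul_of_hyperbolic_pair [FiniteDimensional K V] (hV : finrank K V = 2)
    (B : V →ₗ[K] V →ₗ[K] K) (hsymm : ∀ v w, B v w = B w v) {u w : V} (huu : B u u = 0)
    (hww : B w w = 0) (huw : B u w = 1) (v : V) : v = B w v • u + B u v • w := by
  have hu : u ≠ 0 := by rintro rfl; simp at huw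
  have hker : LinearMap.ker (B u) = K ∙ u := by
    refine Submodule.eq_span_singleton_of_ne_top hV (fun h => ?_) hu huu
    simp [LinearMap.ker_eq_top.1 h] at huw
  obtain ⟨t, ht⟩ := Submodule.mem_span_singleton.1 <|
    hker ▸ (show v - B w v • u - B u v • w ∈ LinearMap.ker (B u) by simp [huu, huw])
  have ht0 : t = 0 := by simpa [hww, hsymm w u, huw] using congrArg (B w) ht
  rw [ht0, zero_smul, sub_sub, eq_comm, sub_eq_zero] at ht
  exact ht

theorem apply_self_eq_of_hyperbolic_pair [FiniteDimensional K V] (hV : finrank K V = 2)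
    (B : V →ₗ[K] V →ₗ[K] K) (hsymm : ∀ v w, B v w = B w v) {u w : V} (huu : B u u = 0)
    (hww : B w w = 0) (huw : B u w = 1) (v : V) : B v v = 2 * (B u v * B w v) := by
  conv_lhs => rw [eq_smul_add_smul_of_hyperbolic_pair hV B hsymm huu hww huw v]
  simp [huu, hww, huw, hsymm w u]
  ring

end Bilinear

section Representation

variable {V : Type*} [AddCommGroup V] [Module ℝ V] [TopologicalSpace V] [IsTopologicalAddGroup V]
  [ContinuousSMul ℝ V] [T2Space V] [FiniteDimensional ℝ V]

theorem LinearMap.continuous_apply_self (B : V →ₗ[ℝ] V →ₗ[ℝ] ℝ) : Continuous fun v => B v v := by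
  let b := Module.finBasis ℝ V
  have hcoord (i) : Continuous fun v => b.repr v i := (b.coord i).continuous_of_finiteDimensional
  have hsum (v : V) : B v v = ∑ i, ∑ j, b.repr v i * b.repr v j * B (b i) (b j) := by
    rw [← LinearMap.sum_repr_mul_repr_mul b b v v]
    simp [Finsupp.sum_fintype, mul_assoc]
  simp only [hsum]
  fun_prop

theorem exists_isotropic_of_not_definite (hV : 1 < finrank ℝ V) (B : V →ₗ[ℝ] V →ₗ[ℝ] ℝ)
    (h : ¬((∀ v, v ≠ 0 → 0 < B v v) ∨ (∀ v, v ≠ 0 → B v v < 0))) : ∃ u ≠ 0, B u u = 0 := by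
  push Not at h
  obtain ⟨⟨v₁, hv₁, h₁⟩, ⟨v₂, hv₂, h₂⟩⟩ := h
  obtain ⟨u, hu, huu⟩ := (isConnected_compl_singleton_of_one_lt_rank
    (one_lt_rank_of_one_lt_finrank hV) 0).isPreconnected.intermediate_value hv₁ hv₂
    (B.continuous_apply_self.continuousOn) ⟨h₁, h₂⟩
  exact ⟨u, hu, huu⟩

variable {G : Type*} [Group G] [TopologicalSpace G]

theorem mem_span_singleton_of_isometry [PreconnectedSpace G] (hV : finrank ℝ V = 2)
    (B : V →ₗ[ℝ] V →ₗ[ℝ] ℝ) (hsymm : ∀ v w, B v w = B w v) (hB : B ≠ 0)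
    (ρ : G →* (V ≃ₗ[ℝ] V)) (hρ : ∀ v, Continuous fun g => ρ g v)
    (hiso : ∀ g v w, B (ρ g v) (ρ g w) = B v w) {u : V} (hu : u ≠ 0) (huu : B u u = 0) (g : G) :
    ρ g u ∈ ℝ ∙ u := by
  by_cases hrad : B u = 0
  · have hker : LinearMap.ker B = ℝ ∙ u :=
      Submodule.eq_span_singleton_of_ne_top hV (fun h => hB (LinearMap.ker_eq_top.1 h)) hu hrad
    exact hker ▸ B.map_eq_zero_of_isometry (ρ g) (hiso g) hrad
  · obtain ⟨w, huw, hww⟩ := exists_hyperbolic_partner B hsymm huu hrad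
    have hker : LinearMap.ker (B u) = ℝ ∙ u :=
      Submodule.eq_span_singleton_of_ne_top hV (fun h => hrad (LinearMap.ker_eq_top.1 h)) hu
        huu
    have hmul (g : G) : B u (ρ g u) * B w (ρ g u) = 0 := by
      have := apply_self_eq_of_hyperbolic_pair hV B hsymm huu hww huw (ρ g u)
      rw [hiso, huu] at this
      linarith
    have hne (g : G) : B u (ρ g u) ≠ 0 ∨ B w (ρ g u) ≠ 0 := by
      by_contra! h
      have := eq_smul_add_smul_of_hyperbolic_pair hV B hsymm huu hww huw (ρ g u)
      simp [h.1, h.2, hu] at this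
    have h1 : B u (ρ 1 u) = 0 := by simpa using huu
    have hcont (x : V) : Continuous fun g => B x (ρ g u) :=
      (B x).continuous_of_finiteDimensional.comp (hρ u)
    exact hker ▸ eq_zero_of_continuous_of_mul_eq_zero (hcont u) (hcont w) hmul hne h1 g

theorem eq_one_of_mem_span_singleton [CompactSpace G] [PreconnectedSpace G]
    (hV : finrank ℝ V = 2) (ρ : G →* (V ≃ₗ[ℝ] V)) (hρ : ∀ v, Continuous fun g => ρ g v) {u : V}
    (hu : u ≠ 0) (hline : ∀ g, ρ g u ∈ ℝ ∙ u) (g : G) : ρ g = 1 := by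
  obtain ⟨w, hw⟩ := exists_linearIndependent_pair_of_one_lt_finrank (R := ℝ) (by omega) hu
  let b := basisOfLinearIndependentOfCardEqFinrank hw (by simp [hV])
  have hb0 : b 0 = u := by simp [b, coe_basisOfLinearIndependentOfCardEqFinrank]
  let M : G →* Matrix (Fin 2) (Fin 2) ℝ := (LinearMap.toMatrixAlgEquiv b).toMonoidHom.comp
    (LinearEquiv.automorphismGroup.toLinearMapMonoidHom.comp ρ)
  have hM (g : G) (i j : Fin 2) : M g i j = b.coord i (ρ g (b j)) := by
    simp [M, LinearMap.toMatrixAlgEquiv_apply]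
  have hMcont : Continuous M := continuous_matrix fun i j => by
    simp only [hM]
    exact (b.coord i).continuous_of_finiteDimensional.comp (hρ (b j))
  have hlower (g : G) : M g 1 0 = 0 := by
    obtain ⟨c, hc⟩ := Submodule.mem_span_singleton.1 (hline g)
    rw [hM, hb0, ← hc, ← hb0]
    simp
  have hMg : M g = 1 := eq_one_of_continuous_of_upperTriangular M hMcont hlower g
  apply LinearEquiv.toLinearMap_injective
  apply (LinearMap.toMatrixAlgEquiv b).injective
  simpa [M, Module.End.one_eq_id] using hMg

end Representation

/-- **Lemma 2 of the paper.** A 2-dimensional real vector space with a nonzero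
symmetric bilinear form admitting a continuous isometric circle representation
with a nontrivial element must have a definite form. -/
theorem circle_rep_isometric_nontrivial_implies_definite
    (B : EuclideanSpace ℝ (Fin 2) →ₗ[ℝ] EuclideanSpace ℝ (Fin 2) →ₗ[ℝ] ℝ)
    (hsymm : ∀ v w, B v w = B w v)
    (hB0 : B ≠ 0)
    (ρ : Circle →* (EuclideanSpace ℝ (Fin 2) ≃ₗ[ℝ] EuclideanSpace ℝ (Fin 2)))
    (hcont : Continuous fun p : Circle × EuclideanSpace ℝ (Fin 2) => ρ p.1 p.2)
    (hiso : ∀ (z : Circle) (v w : EuclideanSpace ℝ (Fin 2)),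
      B (ρ z v) (ρ z w) = B v w)
    (hnontriv : ∃ z₀ : Circle, ρ z₀ ≠ 1) :
    (∀ v : EuclideanSpace ℝ (Fin 2), v ≠ 0 → 0 < B v v) ∨
    (∀ v : EuclideanSpace ℝ (Fin 2), v ≠ 0 → B v v < 0) := by
  by_contra hdef
  have hV : finrank ℝ (EuclideanSpace ℝ (Fin 2)) = 2 := finrank_euclideanSpace_fin
  obtain ⟨u, hu, huu⟩ := exists_isotropic_of_not_definite (by omega) B hdef
  have hρ (v : EuclideanSpace ℝ (Fin 2)) : Continuous fun z : Circle => ρ z v :=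
    hcont.comp (continuous_id.prodMk continuous_const)
  have hline := mem_span_singleton_of_isometry hV B hsymm hB0 ρ hρ hiso hu huu
  obtain ⟨z₀, hz₀⟩ := hnontriv
  exact hz₀ (eq_one_of_mem_span_singleton hV ρ hρ hu hline z₀)
end

section
/- Let V = EuclideanSpace ℝ (Fin 2) and let B be the symmetric bilinear form on V of signature (1,1) given by B x y = (x 0) * (y 0) - (x 1) * (y 1). Then every group homomorphism ρ : Circle →* (V ≃ₗ[ℝ] V) such that the map (z, v) ↦ ρ z v from Circle × V to V is continuous and each ρ z preserves B (B (ρ z v) (ρ z w) = B v w for all v, w) is trivial: ρ z = 1 for all z ∈ Circle. -/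
set_option maxHeartbeats 1600000 in
/-- **Lorentzian branch of Lemma 2.** A 2-dimensional Lorentzian plane admits
no nontrivial continuous circle representation by linear isometries. -/
theorem circle_rep_lorentzian_trivial
    (B : EuclideanSpace ℝ (Fin 2) → EuclideanSpace ℝ (Fin 2) → ℝ)
    (hB : ∀ x y : EuclideanSpace ℝ (Fin 2), B x y = x 0 * y 0 - x 1 * y 1)
    (ρ : Circle →* (EuclideanSpace ℝ (Fin 2) ≃ₗ[ℝ] EuclideanSpace ℝ (Fin 2)))
    (hcont : Continuous fun p : Circle × EuclideanSpace ℝ (Fin 2) => ρ p.1 p.2)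
    (hiso : ∀ (z : Circle) (v w : EuclideanSpace ℝ (Fin 2)),
      B (ρ z v) (ρ z w) = B v w) :
    ∀ z : Circle, ρ z = 1 := by
  haveI : ConnectedSpace Circle := by
    have h : Function.Surjective Circle.exp := fun z => ⟨Complex.arg z, Circle.exp_arg z⟩
    exact h.connectedSpace Circle.exp.continuous
  -- null vectors
  set u : EuclideanSpace ℝ (Fin 2) := (WithLp.equiv 2 (Fin 2 → ℝ)).symm ![1, 1] with hu
  set v : EuclideanSpace ℝ (Fin 2) := (WithLp.equiv 2 (Fin 2 → ℝ)).symm ![1, -1] with hv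
  have hu0 : u 0 = 1 := rfl
  have hu1 : u 1 = 1 := rfl
  have hv0 : v 0 = 1 := rfl
  have hv1 : v 1 = -1 := rfl
  set f : Circle → ℝ := fun z => (ρ z u) 0 with hf
  set h : Circle → ℝ := fun z => (ρ z u) 1 with hh
  set p : Circle → ℝ := fun z => (ρ z v) 0 with hp
  set q : Circle → ℝ := fun z => (ρ z v) 1 with hq
  -- continuity of matrix coefficients
  have hcu : Continuous fun z : Circle => ρ z u :=
    hcont.comp (continuous_id.prodMk continuous_const)
  have hcv : Continuous fun z : Circle => ρ z v :=
    hcont.comp (continuous_id.prodMk continuous_const)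
  have hfc : Continuous f := (continuous_apply (0 : Fin 2)).comp ((PiLp.continuous_ofLp 2 _).comp hcu)
  have hhc : Continuous h := (continuous_apply (1 : Fin 2)).comp ((PiLp.continuous_ofLp 2 _).comp hcu)
  have hpc : Continuous p := (continuous_apply (0 : Fin 2)).comp ((PiLp.continuous_ofLp 2 _).comp hcv)
  have hqc : Continuous q := (continuous_apply (1 : Fin 2)).comp ((PiLp.continuous_ofLp 2 _).comp hcv)
  -- the quadratic relations
  have huu : ∀ z, f z * f z - h z * h z = 0 := by
    intro z
    have := hiso z u u
    rw [hB, hB] at this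
    simpa [hu0, hu1] using this
  have hvv : ∀ z, p z * p z - q z * q z = 0 := by
    intro z
    have := hiso z v v
    rw [hB, hB] at this
    simpa [hv0, hv1] using this
  have huv : ∀ z, f z * p z - h z * q z = 2 := by
    intro z
    have := hiso z u v
    rw [hB, hB] at this
    rw [hu0, hu1, hv0, hv1] at this
    linarith [this]
  -- values at 1
  have hρ1 : ∀ x : EuclideanSpace ℝ (Fin 2), ρ 1 x = x := by
    intro x; rw [map_one ρ]; rfl
  have hf1 : f 1 = 1 := by simp [hf, hρ1, hu0]
  have hh1 : h 1 = 1 := by simp [hh, hρ1, hu1]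
  have hp1 : p 1 = 1 := by simp [hp, hρ1, hv0]
  have hq1 : q 1 = -1 := by simp [hq, hρ1, hv1]
  -- sign lemma on a connected space
  have sign : ∀ g : Circle → ℝ, Continuous g → (∀ z, g z ≠ 0) → 0 < g 1 → ∀ z, 0 < g z := by
    intro g hg hne hpos z
    by_contra hle
    push_neg at hle
    have h0 : (0 : ℝ) ∈ Set.Icc (g z) (g 1) := ⟨hle, le_of_lt hpos⟩
    obtain ⟨w, hw⟩ := intermediate_value_univ z 1 hg h0
    exact hne w hw
  -- f and p never vanish
  have hfne : ∀ z, f z ≠ 0 := by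
    intro z hz
    have h1 : h z * h z = 0 := by have := huu z; nlinarith
    have h2 : h z = 0 := by nlinarith
    have := huv z
    rw [hz, h2] at this
    norm_num at this
  have hpne : ∀ z, p z ≠ 0 := by
    intro z hz
    have h1 : q z = 0 := by have := hvv z; nlinarith
    have := huv z
    rw [hz, h1] at this
    norm_num at this
  -- case analysis: D z = f z * q z - h z * p z equals ±2
  have hDcases : ∀ z, (h z = f z ∧ q z = -p z ∧ f z * p z = 1 ∧ f z * q z - h z * p z = -2)
      ∨ (f z * q z - h z * p z = 2) := by
    intro z
    have hsq1 : h z * h z = f z * f z := by linarith [huu z]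
    have hsq2 : q z * q z = p z * p z := by linarith [hvv z]
    have h1 : h z = f z ∨ h z = -f z := mul_self_eq_mul_self_iff.mp hsq1
    have h2 : q z = p z ∨ q z = -p z := mul_self_eq_mul_self_iff.mp hsq2
    have h3 := huv z
    rcases h1 with h1 | h1 <;> rcases h2 with h2 | h2
    · exfalso; rw [h1, h2] at h3; nlinarith [h3]
    · rw [h1, h2] at h3
      exact Or.inl ⟨h1, h2, by nlinarith, by rw [h1, h2]; nlinarith⟩
    · rw [h1, h2] at h3
      right; rw [h1, h2]; nlinarith
    · exfalso; rw [h1, h2] at h3; nlinarith [h3]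
  have hDne : ∀ z, f z * q z - h z * p z ≠ 0 := by
    intro z
    rcases hDcases z with ⟨_, _, _, hD⟩ | hD <;> rw [hD] <;> norm_num
  have hDneg : ∀ z, 0 < -(f z * q z - h z * p z) := by
    apply sign
    · exact ((hfc.mul hqc).sub (hhc.mul hpc)).neg
    · intro z hz
      exact hDne z (by linarith [neg_eq_zero.mp hz])
    · rw [hf1, hh1, hp1, hq1]; norm_num
  have key : ∀ z, h z = f z ∧ q z = -p z ∧ f z * p z = 1 := by
    intro z
    rcases hDcases z with ⟨h1, h2, h3, _⟩ | hD
    · exact ⟨h1, h2, h3⟩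
    · exfalso; have := hDneg z; rw [hD] at this; norm_num at this
  have hfpos : ∀ z, 0 < f z := sign f hfc hfne (by rw [hf1]; norm_num)
  -- ρ z u = f z • u
  have hrep : ∀ z, ρ z u = f z • u := by
    intro z
    ext i
    fin_cases i
    · show (ρ z u) 0 = (f z • u) 0
      simp [PiLp.smul_apply, hu0]; rfl
    · show (ρ z u) 1 = (f z • u) 1
      rw [PiLp.smul_apply, hu1, smul_eq_mul, mul_one]
      exact (key z).1
  -- multiplicativity of f
  have hmul : ∀ z w : Circle, f (z * w) = f z * f w := by
    intro z w
    have : ρ (z * w) u = ρ z (ρ w u) := by rw [map_mul]; rfl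
    have h2 : ρ (z * w) u = f w • ρ z u := by rw [this, hrep w, map_smul]
    have h3 : (f w • ρ z u) 0 = f w * f z := by rw [PiLp.smul_apply]; rfl
    have h4 : f (z * w) = f w * f z := by
      show (ρ (z * w)) u 0 = f w * f z
      rw [h2]; exact h3
    rw [h4]; ring
  -- f ≡ 1 by compactness
  have hfone : ∀ z, f z = 1 := by
    obtain ⟨z0, -, hz0⟩ := isCompact_univ.exists_isMaxOn ⟨1, trivial⟩ hfc.continuousOn
    obtain ⟨z1, -, hz1⟩ := isCompact_univ.exists_isMinOn ⟨1, trivial⟩ hfc.continuousOn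
    have hM : ∀ z, f z ≤ f z0 := fun z => hz0 (Set.mem_univ z)
    have hm : ∀ z, f z1 ≤ f z := fun z => hz1 (Set.mem_univ z)
    have hMle : f z0 ≤ 1 := by
      have h1 : f (z0 * z0) = f z0 * f z0 := hmul z0 z0
      have h2 := hM (z0 * z0)
      have h3 := hfpos z0
      nlinarith
    have hmge : 1 ≤ f z1 := by
      have h1 : f (z1 * z1) = f z1 * f z1 := hmul z1 z1
      have h2 := hm (z1 * z1)
      have h3 := hfpos z1
      nlinarith
    intro z
    have := hM z
    have := hm z
    linarith
  -- hence ρ z fixes u and v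
  have hufix : ∀ z, ρ z u = u := by
    intro z; rw [hrep z, hfone z, one_smul]
  have hvfix : ∀ z, ρ z v = v := by
    intro z
    have hpone : p z = 1 := by
      have := (key z).2.2
      rw [hfone z, one_mul] at this
      exact this
    ext i
    fin_cases i
    · show (ρ z v) 0 = v 0
      rw [hv0]; exact hpone
    · show (ρ z v) 1 = v 1
      rw [hv1]
      have := (key z).2.1
      rw [hpone] at this
      exact this
  -- conclude
  intro z
  apply LinearEquiv.toLinearMap_injective
  apply LinearMap.ext
  intro x
  have hx : x = ((x 0 + x 1) / 2) • u + ((x 0 - x 1) / 2) • v := by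
    ext i
    fin_cases i
    · show x 0 = (((x 0 + x 1) / 2) • u + ((x 0 - x 1) / 2) • v) 0
      rw [PiLp.add_apply, PiLp.smul_apply, PiLp.smul_apply, hu0, hv0]
      simp; ring
    · show x 1 = (((x 0 + x 1) / 2) • u + ((x 0 - x 1) / 2) • v) 1
      rw [PiLp.add_apply, PiLp.smul_apply, PiLp.smul_apply, hu1, hv1]
      simp; ring
  show ρ z x = (1 : EuclideanSpace ℝ (Fin 2) ≃ₗ[ℝ] EuclideanSpace ℝ (Fin 2)) x
  have h1 : (1 : EuclideanSpace ℝ (Fin 2) ≃ₗ[ℝ] EuclideanSpace ℝ (Fin 2)) x = x := rfl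
  rw [h1]
  conv_lhs => rw [hx]
  rw [map_add, map_smul, map_smul, hufix z, hvfix z]
  exact hx.symm
end

section
/- Let V = EuclideanSpace ℝ (Fin 2) and let B : V →ₗ[ℝ] V →ₗ[ℝ] ℝ be a symmetric bilinear form that is not identically zero but is degenerate, i.e. there exists v₀ ≠ 0 with B v₀ w = 0 for all w ∈ V. Then every group homomorphism ρ : Circle →* (V ≃ₗ[ℝ] V) such that the map (z, v) ↦ ρ z v from Circle × V to V is continuous and each ρ z preserves B (B (ρ z v) (ρ z w) = B v w for all v, w) is trivial: ρ z = 1 for all z ∈ Circle. -/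
/-- **Degenerate branch of Lemma 2.** A 2-dimensional space with a nonzero
degenerate symmetric bilinear form admits no nontrivial continuous circle
representation by linear isometries. -/
theorem circle_rep_degenerate_trivial
    (B : EuclideanSpace ℝ (Fin 2) →ₗ[ℝ] EuclideanSpace ℝ (Fin 2) →ₗ[ℝ] ℝ)
    (hsymm : ∀ v w, B v w = B w v)
    (hB0 : B ≠ 0)
    (hdeg : ∃ v₀ : EuclideanSpace ℝ (Fin 2), v₀ ≠ 0 ∧
      ∀ w : EuclideanSpace ℝ (Fin 2), B v₀ w = 0)
    (ρ : Circle →* (EuclideanSpace ℝ (Fin 2) ≃ₗ[ℝ] EuclideanSpace ℝ (Fin 2)))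
    (hcont : Continuous fun p : Circle × EuclideanSpace ℝ (Fin 2) => ρ p.1 p.2)
    (hiso : ∀ (z : Circle) (v w : EuclideanSpace ℝ (Fin 2)),
      B (ρ z v) (ρ z w) = B v w) :
    ∀ z : Circle, ρ z = 1 := by
  set V := EuclideanSpace ℝ (Fin 2)
  obtain ⟨v₀, hv₀, hrad⟩ := hdeg
  -- find a vector with B w w ≠ 0
  have hw : ∃ w : V, B w w ≠ 0 := by
    by_contra h
    push_neg at h
    apply hB0
    ext u v
    have h2 : B (u + v) (u + v) = 0 := h _
    simp only [map_add, LinearMap.add_apply, h u, h v] at h2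
    rw [hsymm v u] at h2
    have : B u v + B u v = 0 := by linarith
    have : B u v = 0 := by linarith
    simpa using this
  obtain ⟨w, hww⟩ := hw
  -- v₀, w is a basis
  have hli : LinearIndependent ℝ ![v₀, w] := by
    rw [linearIndependent_fin2]
    constructor
    · intro h
      simp only [Matrix.cons_val_one, Matrix.head_cons, Matrix.cons_val_zero] at h
      rw [h] at hww; simp at hww
    · intro a h
      simp only [Matrix.cons_val_one, Matrix.head_cons, Matrix.cons_val_zero] at h
      have h0 : B v₀ w = 0 := hrad w
      rw [← h] at h0
      simp only [map_smul, LinearMap.smul_apply, smul_eq_mul] at h0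
      rcases mul_eq_zero.1 h0 with ha | hb
      · rw [ha, zero_smul] at h; exact hv₀ h.symm
      · exact hww hb
  have hcard : Fintype.card (Fin 2) = Module.finrank ℝ V := by
    simp [V]
  let bas : Module.Basis (Fin 2) ℝ V := basisOfLinearIndependentOfCardEqFinrank hli hcard
  have hb0 : bas 0 = v₀ := by simp [bas, coe_basisOfLinearIndependentOfCardEqFinrank]
  have hb1 : bas 1 = w := by simp [bas, coe_basisOfLinearIndependentOfCardEqFinrank]
  -- decomposition of any vector
  have hdecomp : ∀ x : V, x = bas.repr x 0 • v₀ + bas.repr x 1 • w := by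
    intro x
    conv_lhs => rw [← bas.sum_repr x]
    rw [Fin.sum_univ_two, hb0, hb1]
  -- uniqueness of coefficients
  have huniq : ∀ s r : ℝ, bas.repr (s • v₀ + r • w) 0 = s ∧ bas.repr (s • v₀ + r • w) 1 = r := by
    intro s r
    rw [← hb0, ← hb1]
    simp [Finsupp.single_apply]
  -- anything in the radical is a multiple of v₀
  have hradical : ∀ x : V, (∀ u : V, B x u = 0) → ∃ s : ℝ, x = s • v₀ := by
    intro x hx
    refine ⟨bas.repr x 0, ?_⟩
    have hx1 : bas.repr x 1 = 0 := by
      have h := hx w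
      conv_lhs at h => rw [hdecomp x]
      simp only [map_add, map_smul, LinearMap.add_apply, LinearMap.smul_apply, hrad w,
        smul_eq_mul, mul_zero, zero_add] at h
      exact (mul_eq_zero.1 h).resolve_right hww
    conv_lhs => rw [hdecomp x]
    rw [hx1, zero_smul, add_zero]
  -- ρ z v₀ is in the radical
  have hstab : ∀ z : Circle, ∃ s : ℝ, ρ z v₀ = s • v₀ := by
    intro z
    apply hradical
    intro u
    have h := hiso z v₀ ((ρ z).symm u)
    rw [LinearEquiv.apply_symm_apply] at h
    rw [h]; exact hrad _
  choose c hc using hstab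
  -- c is multiplicative
  have hv₀inj : Function.Injective (fun s : ℝ => s • v₀) := smul_left_injective ℝ hv₀
  have hcmul : ∀ z z' : Circle, c (z * z') = c z * c z' := by
    intro z z'
    apply hv₀inj
    simp only
    rw [← hc (z * z'), map_mul]
    show (ρ z) ((ρ z') v₀) = _
    rw [hc z', map_smul, hc z, smul_smul, mul_comm]
  have hc1 : c 1 = 1 := by
    apply hv₀inj
    simp only
    rw [← hc 1, map_one]
    simp
  -- square roots in Circle
  have hsqrt : ∀ z : Circle, ∃ y : Circle, y * y = z := by
    intro z
    refine ⟨Circle.exp (Complex.arg z / 2), ?_⟩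
    rw [← Circle.exp_add]
    rw [add_halves]
    exact Circle.exp_arg z
  -- c z > 0
  have hcpos : ∀ z : Circle, 0 < c z := by
    intro z
    have hne : c z ≠ 0 := by
      intro h
      have := hc z
      rw [h, zero_smul] at this
      exact hv₀ ((ρ z).injective (by simpa using this))
    obtain ⟨y, hy⟩ := hsqrt z
    have : c z = c y * c y := by rw [← hy, hcmul]
    rw [this]
    rcases (mul_self_nonneg (c y)).lt_or_eq with h | h
    · exact h
    · exact absurd (this.trans h.symm) hne
  -- c is continuous
  have hcont' : ∀ v : V, Continuous (fun z : Circle => ρ z v) := by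
    intro v
    exact hcont.comp (continuous_id.prodMk continuous_const)
  have hφcont : Continuous (bas.coord 0 : V →ₗ[ℝ] ℝ) := (bas.coord 0).continuous_of_finiteDimensional
  have hccont : Continuous c := by
    have heq : (fun z : Circle => c z) = (fun z => (bas.coord 0) (ρ z v₀)) := by
      funext z
      rw [hc z]
      have := (huniq (c z) 0).1
      simpa [Module.Basis.coord_apply] using this.symm
    show Continuous fun z : Circle => c z
    rw [heq]
    exact hφcont.comp (hcont' v₀)
  -- boundedness kills c ≠ 1
  have hcbdd : ∃ M : ℝ, ∀ z : Circle, |c z| ≤ M := by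
    have hK : IsCompact (Set.range c) := isCompact_range hccont
    obtain ⟨M, hM⟩ := hK.isBounded.exists_norm_le
    exact ⟨M, fun z => hM _ ⟨z, rfl⟩⟩
  have hcpow : ∀ (z : Circle) (n : ℕ), c (z ^ n) = c z ^ n := by
    intro z n
    induction n with
    | zero => simpa using hc1
    | succ n ih => rw [pow_succ, pow_succ, hcmul, ih]
  have hcone : ∀ z : Circle, c z = 1 := by
    intro z
    by_contra hne
    obtain ⟨M, hM⟩ := hcbdd
    -- get an element with c > 1
    have hgt : ∃ y : Circle, 1 < c y := by
      rcases lt_or_gt_of_ne hne with h | h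
      · refine ⟨z⁻¹, ?_⟩
        have : c z * c z⁻¹ = 1 := by rw [← hcmul, mul_inv_cancel, hc1]
        have hinv : c z⁻¹ = (c z)⁻¹ := (inv_eq_of_mul_eq_one_right this).symm
        rw [hinv]
        exact (one_lt_inv₀ (hcpos z)).2 h
      · exact ⟨z, h⟩
    obtain ⟨y, hy⟩ := hgt
    obtain ⟨n, hn⟩ := pow_unbounded_of_one_lt M hy
    have := hM (y ^ n)
    rw [hcpow] at this
    have hpos : 0 < c y ^ n := pow_pos (hcpos y) n
    rw [abs_of_pos hpos] at this
    linarith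
  -- decomposition of ρ z w
  set a : Circle → ℝ := fun z => bas.repr (ρ z w) 1 with ha_def
  set t : Circle → ℝ := fun z => bas.repr (ρ z w) 0 with ht_def
  have htw : ∀ z : Circle, ρ z w = t z • v₀ + a z • w := fun z => hdecomp (ρ z w)
  -- a z ^ 2 = 1
  have hBwv₀ : B w v₀ = 0 := by rw [hsymm]; exact hrad w
  have hasq : ∀ z : Circle, a z ^ 2 = 1 := by
    intro z
    have h := hiso z w w
    conv_lhs at h => rw [htw z]
    have hexp : B (t z • v₀ + a z • w) (t z • v₀ + a z • w) = a z * (a z * B w w) := by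
      simp [map_add, map_smul, hrad, hBwv₀, mul_add]
    rw [hexp] at h
    have h2 : (a z ^ 2 - 1) * B w w = 0 := by
      rw [sub_mul, one_mul, sq, mul_assoc, h, sub_self]
    have h3 := (mul_eq_zero.1 h2).resolve_right hww
    linarith
  -- a is "multiplicative on squares"
  have hamul : ∀ y : Circle, a (y * y) = a y * a y := by
    intro y
    have hcomp : ρ (y * y) w = (t y + a y * t y) • v₀ + (a y * a y) • w := by
      rw [map_mul]
      show (ρ y) ((ρ y) w) = _
      conv_lhs => rw [htw y]
      rw [map_add, map_smul, map_smul, hc y, htw y, hcone y]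
      module
    have h := (huniq (t y + a y * t y) (a y * a y)).2
    rw [← hcomp] at h
    exact h
  have haone : ∀ z : Circle, a z = 1 := by
    intro z
    obtain ⟨y, hy⟩ := hsqrt z
    have hnn : 0 ≤ a z := by rw [← hy, hamul]; exact mul_self_nonneg _
    have := hasq z
    nlinarith
  -- hence ρ z w = w + t z • v₀, t additive
  have htw' : ∀ z : Circle, ρ z w = t z • v₀ + w := by
    intro z
    rw [htw z, haone z, one_smul]
  have htadd : ∀ z z' : Circle, t (z * z') = t z + t z' := by
    intro z z'
    have hcomp : ρ (z * z') w = (t z + t z') • v₀ + (1 : ℝ) • w := by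
      rw [map_mul]
      show (ρ z) ((ρ z') w) = _
      rw [htw' z', map_add, map_smul, hc z, hcone z, htw' z]
      module
    have h := (huniq (t z + t z') 1).1
    rw [← hcomp] at h
    exact h
  have ht1 : t 1 = 0 := by
    have := htadd 1 1
    simp only [mul_one] at this
    linarith
  have htpow : ∀ (z : Circle) (n : ℕ), t (z ^ n) = n * t z := by
    intro z n
    induction n with
    | zero => simpa using ht1
    | succ n ih => rw [pow_succ, htadd, ih]; push_cast; ring
  have htcont : Continuous t := by
    have : t = (fun z => (bas.coord 0) (ρ z w)) := by
      funext z; simp [ht_def, Module.Basis.coord_apply]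
    rw [this]
    exact hφcont.comp (hcont' w)
  have htzero : ∀ z : Circle, t z = 0 := by
    intro z
    by_contra hne
    have hK : IsCompact (Set.range t) := isCompact_range htcont
    obtain ⟨M, hM⟩ := hK.isBounded.exists_norm_le
    obtain ⟨n, hn⟩ := exists_nat_gt (M / |t z|)
    have h1 : |t (z ^ n)| ≤ M := hM _ ⟨z ^ n, rfl⟩
    rw [htpow, abs_mul, Nat.abs_cast] at h1
    have habs : 0 < |t z| := abs_pos.2 hne
    have : (n : ℝ) ≤ M / |t z| := (le_div_iff₀ habs).2 h1
    linarith
  -- conclude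
  intro z
  apply LinearEquiv.toLinearMap_injective
  apply bas.ext
  intro i
  fin_cases i
  · show (ρ z) (bas 0) = bas 0
    rw [hb0, hc z, hcone z, one_smul]
  · show (ρ z) (bas 1) = bas 1
    rw [hb1, htw' z, htzero z, zero_smul, zero_add]
end

section
/- Let E be a real Banach space, A : E →L[ℝ] E a continuous linear map, and a a nonzero real number such that A ∘ A = -(a^2) • (identity on E). Then for every φ ∈ ℝ, the exponential satisfies exp(φ • A) = Real.cos (a * φ) • (identity) + (Real.sin (a * φ) / a) • A. -/
open NormedSpace

set_option synthInstance.maxHeartbeats 1000000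
set_option maxHeartbeats 1000000

/-- **Property 3 computation.** If `A ∘ A = -a² • id` with `a ≠ 0`, then
`exp (φ • A) = cos (a φ) • id + (sin (a φ) / a) • A`. -/
theorem exp_of_sq_eq_neg_sq_smul_id
    (E : Type*) [NormedAddCommGroup E] [NormedSpace ℝ E] [CompleteSpace E]
    (A : E →L[ℝ] E) (a : ℝ) (ha : a ≠ 0)
    (hA : A.comp A = -(a ^ 2) • ContinuousLinearMap.id ℝ E) :
    ∀ φ : ℝ,
      exp (φ • A) =
        Real.cos (a * φ) • ContinuousLinearMap.id ℝ E +
          (Real.sin (a * φ) / a) • A := by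
  intro φ
  set x : E →L[ℝ] E := φ • A with hxdef
  set c : ℝ := -((a * φ) ^ 2) with hcdef
  have hmul : A * A = -(a ^ 2) • (1 : E →L[ℝ] E) := hA
  have hx2 : x ^ 2 = c • (1 : E →L[ℝ] E) := by
    rw [sq, hxdef, smul_mul_assoc, mul_smul_comm, hmul, smul_smul, smul_smul, hcdef]
    ring_nf
  have heven : ∀ k : ℕ, x ^ (2 * k) = c ^ k • (1 : E →L[ℝ] E) := by
    intro k
    rw [pow_mul, hx2, smul_pow, one_pow]
  have hodd : ∀ k : ℕ, x ^ (2 * k + 1) = (c ^ k * φ) • A := by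
    intro k
    rw [pow_succ, heven, smul_mul_assoc, one_mul, hxdef, smul_smul]
  have hck : ∀ k : ℕ, c ^ k = (-1 : ℝ) ^ k * (a * φ) ^ (2 * k) := by
    intro k
    rw [hcdef, pow_mul]
    rw [neg_pow, mul_pow]
  rw [exp_eq_tsum (𝕂 := ℝ)]
  refine HasSum.tsum_eq ?_
  refine HasSum.even_add_odd ?_ ?_
  · have h := (Real.hasSum_cos (a * φ)).smul_const (1 : E →L[ℝ] E)
    convert h using 2 with k
    case e'_3 => rfl
    rw [heven, smul_smul, hck]
    congr 1
    field_simp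
    case e'_6 => rfl
  · have h := ((Real.hasSum_sin (a * φ)).div_const a).smul_const A
    convert h using 2 with k
    case e'_3 => rfl
    rw [hodd, smul_smul, hck]
    congr 1
    rw [pow_succ]
    field_simp
end

section
/- Let E = EuclideanSpace ℝ (Fin 2), let a > 0 be a real number, and let A : E →L[ℝ] E be a continuous linear map with A ∘ A = -(a^2) • (identity on E). If exp(2π • A) = identity and exp(φ • A) ≠ identity for every φ with 0 < φ < 2π, then a = 1. -/
open NormedSpace

section Aux

variable {𝔸 : Type*} [NormedRing 𝔸] [NormedAlgebra ℝ 𝔸]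

lemma aux_pow_even {B : 𝔸} (hB : B ^ 2 = -1) (k : ℕ) :
    B ^ (2 * k) = (-1 : ℝ) ^ k • (1 : 𝔸) := by
  induction k with
  | zero => simp
  | succ n ih =>
    have h2 : 2 * (n + 1) = 2 * n + 2 := by ring
    rw [h2, pow_add, ih, hB, pow_succ]
    simp [smul_mul_assoc]

lemma aux_pow_odd {B : 𝔸} (hB : B ^ 2 = -1) (k : ℕ) :
    B ^ (2 * k + 1) = (-1 : ℝ) ^ k • B := by
  rw [pow_succ, aux_pow_even hB, smul_mul_assoc, one_mul]

/-- Closed form for `exp` of `t • B` when `B ^ 2 = -1`. -/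
lemma exp_smul_of_sq_eq_neg_one [CompleteSpace 𝔸] {B : 𝔸} (hB : B ^ 2 = -1) (t : ℝ) :
    exp (t • B) = Real.cos t • (1 : 𝔸) + Real.sin t • B := by
  rw [exp_eq_tsum (𝕂 := ℝ)]
  refine HasSum.tsum_eq ?_
  have hc := (Real.hasSum_cos t).smul_const (1 : 𝔸)
  have hs := (Real.hasSum_sin t).smul_const B
  refine HasSum.even_add_odd ?_ ?_
  · convert hc using 2 with k
    rw [smul_pow, aux_pow_even hB, smul_smul, smul_smul]
    congr 1
    field_simp
  · convert hs using 2 with k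
    rw [smul_pow, aux_pow_odd hB, smul_smul, smul_smul]
    congr 1
    field_simp

lemma aux_smul_one_inj [NormOneClass 𝔸] {s r : ℝ} (h : s • (1 : 𝔸) = r • 1) :
    s = r := by
  have h0 : (s - r) • (1 : 𝔸) = 0 := by rw [sub_smul, h, sub_self]
  have := congrArg norm h0
  rw [norm_smul, norm_one, norm_zero, mul_one, norm_eq_zero] at this
  linarith [abs_nonneg (s - r), this ▸ le_abs_self (s - r)]

lemma aux_normalized_sq {A : 𝔸} {a : ℝ} (ha : a ≠ 0)
    (h : A * A = -(a ^ 2) • 1) : (a⁻¹ • A) ^ 2 = -1 := by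
  rw [sq, smul_mul_smul_comm, h, smul_smul]
  rw [show a⁻¹ * a⁻¹ * -(a ^ 2) = -1 by rw [sq]; field_simp]
  simp

lemma aux_cos_eq_one [NormOneClass 𝔸] {B : 𝔸} (hB : B ^ 2 = -1) {c : ℝ}
    (hc : Real.cos c • (1 : 𝔸) + Real.sin c • B = 1) : Real.cos c = 1 := by
  have hsin : Real.sin c = 0 := by
    by_contra hsin
    have hBscal : B = ((1 - Real.cos c) / Real.sin c) • (1 : 𝔸) := by
      have h1 : Real.sin c • B = (1 - Real.cos c) • (1 : 𝔸) := by
        rw [sub_smul, one_smul]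
        exact eq_sub_of_add_eq' hc
      have h2 := congrArg (fun T : 𝔸 => (Real.sin c)⁻¹ • T) h1
      simp only [smul_smul, inv_mul_cancel₀ hsin, one_smul] at h2
      rw [h2, div_eq_inv_mul]
    set q := (1 - Real.cos c) / Real.sin c with hq
    have hq2 : (q ^ 2) • (1 : 𝔸) = (-1 : ℝ) • 1 := by
      have h3 : (q • (1 : 𝔸)) ^ 2 = -1 := by rw [← hBscal]; exact hB
      rw [smul_pow, one_pow] at h3
      rw [neg_one_smul]
      exact h3
    have := aux_smul_one_inj hq2
    nlinarith [sq_nonneg q]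
  rw [hsin, zero_smul, add_zero] at hc
  have : Real.cos c • (1 : 𝔸) = (1 : ℝ) • 1 := by rw [one_smul]; exact hc
  exact aux_smul_one_inj this

end Aux

/-- **Effectiveness in Property 3.** If `A ∘ A = -a² • id` on the Euclidean
plane, `exp (2π • A) = id`, and `exp (φ • A) ≠ id` for `0 < φ < 2π`,
then `a = 1`. -/
theorem effective_circle_action_generator_norm_one
    (a : ℝ) (ha : 0 < a)
    (A : EuclideanSpace ℝ (Fin 2) →L[ℝ] EuclideanSpace ℝ (Fin 2))
    (hA : A.comp A = -(a ^ 2) • ContinuousLinearMap.id ℝ (EuclideanSpace ℝ (Fin 2)))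
    (hper : exp ((2 * Real.pi) • A) =
      ContinuousLinearMap.id ℝ (EuclideanSpace ℝ (Fin 2)))
    (heff : ∀ φ : ℝ, 0 < φ → φ < 2 * Real.pi →
      exp (φ • A) ≠ ContinuousLinearMap.id ℝ (EuclideanSpace ℝ (Fin 2))) :
    a = 1 := by
  have ha' : (a : ℝ) ≠ 0 := ne_of_gt ha
  have hid : (ContinuousLinearMap.id ℝ (EuclideanSpace ℝ (Fin 2)))
      = (1 : EuclideanSpace ℝ (Fin 2) →L[ℝ] EuclideanSpace ℝ (Fin 2)) := rfl
  have hA2 : A * A = -(a ^ 2) • (1 : EuclideanSpace ℝ (Fin 2) →L[ℝ] EuclideanSpace ℝ (Fin 2)) := by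
    rw [← hid]; exact hA
  have hB2 : (a⁻¹ • A) ^ 2 = -1 := aux_normalized_sq ha' hA2
  have hkey : ∀ φ : ℝ, φ • A = (a * φ) • (a⁻¹ • A) := by
    intro φ
    rw [smul_smul]
    congr 1
    field_simp
  have hexp : ∀ φ : ℝ, exp (φ • A) =
      Real.cos (a * φ) • (1 : EuclideanSpace ℝ (Fin 2) →L[ℝ] EuclideanSpace ℝ (Fin 2))
        + Real.sin (a * φ) • (a⁻¹ • A) := by
    intro φ
    rw [hkey φ, exp_smul_of_sq_eq_neg_one hB2]
  -- from the period: cos (a * 2π) = 1, so a is a positive integer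
  have hcos1 : Real.cos (a * (2 * Real.pi)) = 1 := by
    refine aux_cos_eq_one hB2 ?_
    rw [← hexp, hper, hid]
  obtain ⟨n, hn⟩ := (Real.cos_eq_one_iff _).mp hcos1
  have hpi : (0 : ℝ) < 2 * Real.pi := by positivity
  have han : a = n := by
    have := mul_right_cancel₀ (ne_of_gt hpi) hn
    linarith
  have hn1 : (1 : ℤ) ≤ n := by
    by_contra h
    push_neg at h
    have : (n : ℝ) ≤ 0 := by exact_mod_cast Int.lt_add_one_iff.mp (by omega)
    linarith [han ▸ ha]
  -- if n ≥ 2, we contradict effectiveness with φ = 2π / a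
  by_contra hne1
  have hn2 : (2 : ℤ) ≤ n := by
    rcases lt_or_eq_of_le hn1 with h | h
    · omega
    · exfalso; apply hne1; rw [han, ← h]; norm_num
  have ha2 : (2 : ℝ) ≤ a := by rw [han]; exact_mod_cast hn2
  have hφpos : 0 < 2 * Real.pi / a := by positivity
  have hφlt : 2 * Real.pi / a < 2 * Real.pi := by
    rw [div_lt_iff₀ ha]
    nlinarith
  apply heff (2 * Real.pi / a) hφpos hφlt
  rw [hexp, mul_div_cancel₀ _ ha', Real.cos_two_pi, Real.sin_two_pi, one_smul, hid]
  rw [zero_smul ℝ (a⁻¹ • A), add_zero]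
end

section
/- Work in V := Fin 4 → ℝ with the Minkowski bilinear form η defined by η x y = -(x 0)*(y 0) + (x 1)*(y 1) + (x 2)*(y 2) + (x 3)*(y 3). Let S : V →ₗ[ℝ] V be η-skew-adjoint, i.e. η (S x) y = - η x (S y) for all x, y. Set K := ker S and let P := {v | ∀ k ∈ K, η v k = 0} be the η-orthogonal complement of K. Assume K has dimension 2 and that η is positive definite on P (η p p > 0 for every nonzero p ∈ P). Then S x ∈ P for every x ∈ V, and there exists a real number a > 0 such that S (S p) = -(a^2) • p for every p ∈ P. -/
set_option maxHeartbeats 1000000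


/-- **Linear content of Property 3.** For an `η`-skew-adjoint map `S` whose
kernel `K` is 2-dimensional with positive definite orthogonal complement `P`,
the image of `S` lies in `P` and `S² = -a²` on `P` for some `a > 0`. -/
theorem skew_adjoint_square_on_orthogonal_complement
    (η : (Fin 4 → ℝ) → (Fin 4 → ℝ) → ℝ)
    (hη : ∀ x y : Fin 4 → ℝ,
      η x y = -(x 0 * y 0) + x 1 * y 1 + x 2 * y 2 + x 3 * y 3)
    (S : (Fin 4 → ℝ) →ₗ[ℝ] (Fin 4 → ℝ))
    (hskew : ∀ x y : Fin 4 → ℝ, η (S x) y = -η x (S y))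
    (K : Submodule ℝ (Fin 4 → ℝ)) (hK : K = LinearMap.ker S)
    (P : Set (Fin 4 → ℝ)) (hP : P = {v | ∀ k ∈ K, η v k = 0})
    (hdim : Module.finrank ℝ K = 2)
    (hpos : ∀ p ∈ P, p ≠ 0 → 0 < η p p) :
    (∀ x : Fin 4 → ℝ, S x ∈ P) ∧
    ∃ a : ℝ, 0 < a ∧ ∀ p ∈ P, S (S p) = -(a ^ 2) • p := by
  classical
  -- basic algebraic properties of η
  have hsymm : ∀ x y, η x y = η y x := by intro x y; rw [hη, hη]; ring
  have hexp : ∀ (c d : ℝ) (x y z : Fin 4 → ℝ),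
      η (c • x + d • y) z = c * η x z + d * η y z := by
    intro c d x y z
    simp only [hη, Pi.add_apply, Pi.smul_apply, smul_eq_mul]
    ring
  -- η as a bilinear form
  set B : LinearMap.BilinForm ℝ (Fin 4 → ℝ) :=
    LinearMap.mk₂ ℝ (fun x y => -(x 0 * y 0) + x 1 * y 1 + x 2 * y 2 + x 3 * y 3)
      (by intro m₁ m₂ n; simp only [Pi.add_apply]; ring)
      (by intro c m n; simp only [Pi.smul_apply, smul_eq_mul]; ring)
      (by intro m n₁ n₂; simp only [Pi.add_apply]; ring)
      (by intro c m n; simp only [Pi.smul_apply, smul_eq_mul]; ring) with hBdef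
  have hB : ∀ x y, B x y = η x y := by intro x y; rw [hη]; rfl
  have hrefl : B.IsRefl := by
    intro x y h
    rw [hB] at h ⊢
    rw [hsymm]; exact h
  have hnd : B.Nondegenerate := by
    refine (LinearMap.IsRefl.nondegenerate_iff_separatingLeft hrefl).mpr ?_
    intro x h
    have h0 := h ![1,0,0,0]
    have h1 := h ![0,1,0,0]
    have h2 := h ![0,0,1,0]
    have h3 := h ![0,0,0,1]
    norm_num [hBdef] at h0 h1 h2 h3
    simp at h0 h1 h2 h3
    funext i
    fin_cases i <;> simp [h0, h1, h2, h3]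
  -- P is the orthogonal complement of K
  set P' : Submodule ℝ (Fin 4 → ℝ) := B.orthogonal K with hP'def
  have hPP' : P = (P' : Set (Fin 4 → ℝ)) := by
    ext v
    simp only [hP, Set.mem_setOf_eq, SetLike.mem_coe, hP'def,
      LinearMap.BilinForm.mem_orthogonal_iff]
    constructor
    · intro h k hk; have := h k hk; rw [hB, hsymm]; exact this
    · intro h k hk; have := h k hk; rw [hB] at this
      rw [hsymm]; exact this
  -- the image of S lies in P'
  have himg : ∀ x, S x ∈ P' := by
    intro x k hk
    have hSk : S k = 0 := by rw [hK] at hk; exact hk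
    rw [hB, hsymm, hskew, hSk, hη]
    simp
  have himgP : ∀ x, S x ∈ P := by intro x; rw [hPP']; exact himg x
  refine ⟨himgP, ?_⟩
  -- K ∩ P' = ⊥
  have hKP : K ⊓ P' = ⊥ := by
    rw [Submodule.eq_bot_iff]
    rintro v ⟨hvK, hvP⟩
    by_contra hv
    have h1 : 0 < η v v := by
      apply hpos v _ hv
      rw [hPP']; exact hvP
    have h2 : η v v = 0 := by
      have := hvP v hvK
      rw [hB] at this
      exact this
    linarith
  -- dim P' = 2
  have hdimP : Module.finrank ℝ P' = 2 := by
    rw [hP'def, LinearMap.BilinForm.finrank_orthogonal hnd, hdim]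
    simp [Module.finrank_fin_fun]
  -- pick a nonzero p₀ ∈ P'
  have hP'ne : P' ≠ ⊥ := by
    intro h
    rw [h] at hdimP
    simp at hdimP
  obtain ⟨p₀, hp₀P, hp₀⟩ := Submodule.exists_mem_ne_zero_of_ne_bot hP'ne
  have hp₀K : p₀ ∉ K := by
    intro h
    have : p₀ ∈ K ⊓ P' := ⟨h, hp₀P⟩
    rw [hKP] at this
    exact hp₀ this
  set q : Fin 4 → ℝ := S p₀ with hq
  have hqP : q ∈ P' := himg p₀
  have hqne : q ≠ 0 := by
    intro h
    apply hp₀K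
    rw [hK]
    exact h
  -- orthogonality and positivity data
  have horth : η p₀ q = 0 := by
    have h1 : η q p₀ = -η p₀ q := hskew p₀ p₀
    have h2 : η q p₀ = η p₀ q := hsymm q p₀
    linarith
  have hN₀ : 0 < η p₀ p₀ := hpos p₀ (by rw [hPP']; exact hp₀P) hp₀
  have hN₁ : 0 < η q q := hpos q (by rw [hPP']; exact hqP) hqne
  -- p₀, q span P'
  have hli : LinearIndependent ℝ ![p₀, q] := by
    rw [LinearIndependent.pair_iff]
    intro s t hst
    have h1 : η (s • p₀ + t • q) p₀ = 0 := by rw [hst, hη]; simp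
    have h2 : η (s • p₀ + t • q) q = 0 := by rw [hst, hη]; simp
    rw [hexp] at h1 h2
    rw [hsymm q p₀] at h1
    rw [horth] at h1 h2
    constructor
    · nlinarith
    · nlinarith
  have hspan : Submodule.span ℝ {p₀, q} = P' := by
    apply Submodule.eq_of_le_of_finrank_le
    · rw [Submodule.span_le]
      rintro v (rfl | rfl)
      · exact hp₀P
      · exact hqP
    · rw [hdimP]
      have : ({p₀, q} : Set (Fin 4 → ℝ)) = Set.range ![p₀, q] := by
        simp [Matrix.range_cons, Matrix.range_empty, Set.insert_comm]
        ext v; simp [or_comm]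
      rw [this, finrank_span_eq_card hli]
      simp
  have hmem : ∀ p ∈ P', ∃ c d : ℝ, c • p₀ + d • q = p := by
    intro p hp
    rw [← hspan] at hp
    exact Submodule.mem_span_pair.mp hp
  -- compute S² p₀
  obtain ⟨c, d, hcd⟩ := hmem (S (S p₀)) (himg (S p₀))
  have hd0 : d = 0 := by
    have h1 : η (S (S p₀)) (S p₀) = -η (S p₀) (S (S p₀)) := hskew (S p₀) (S p₀)
    have h2 : η (S p₀) (S (S p₀)) = η (S (S p₀)) (S p₀) := hsymm _ _
    have h3 : η (S (S p₀)) q = 0 := by rw [hq]; linarith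
    rw [← hcd, hexp, horth] at h3
    have h4 : d * η q q = 0 := by linarith
    exact (mul_eq_zero.mp h4).resolve_right hN₁.ne'
  have hc : c * η p₀ p₀ = -η q q := by
    have h1 : η (S (S p₀)) p₀ = -η (S p₀) (S p₀) := hskew (S p₀) p₀
    rw [← hcd, hexp, hsymm q p₀, horth] at h1
    rw [← hq] at h1
    linarith [h1]
  -- define a
  set a : ℝ := Real.sqrt (η q q / η p₀ p₀) with ha
  have hapos : 0 < a := Real.sqrt_pos.mpr (div_pos hN₁ hN₀)
  have ha2 : a ^ 2 = η q q / η p₀ p₀ := by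
    rw [ha, sq, Real.mul_self_sqrt (le_of_lt (div_pos hN₁ hN₀))]
  have hceq : c = -(a ^ 2) := by
    rw [ha2]
    field_simp
    linarith [hc]
  have hS2p₀ : S (S p₀) = -(a ^ 2) • p₀ := by
    rw [← hcd, hd0, hceq]
    simp
  have hS2q : S (S q) = -(a ^ 2) • q := by
    have : S (S q) = S (S (S p₀)) := by rw [hq]
    rw [this, hS2p₀, map_smul]
  refine ⟨a, hapos, ?_⟩
  intro p hp
  rw [hPP'] at hp
  obtain ⟨c', d', hcd'⟩ := hmem p hp
  rw [← hcd', map_add, map_smul, map_smul, map_add, map_smul, map_smul, hS2q, hS2p₀]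
  module
end

section
/- Work in V := Fin 4 → ℝ with the Minkowski bilinear form η defined by η x y = -(x 0)*(y 0) + (x 1)*(y 1) + (x 2)*(y 2) + (x 3)*(y 3). Let S : V →ₗ[ℝ] V be η-skew-adjoint (η (S x) y = - η x (S y) for all x, y), set K := ker S, let P := {v | ∀ k ∈ K, η v k = 0}, and assume K has dimension 2 and η is positive definite on P. Then for every α ∈ V: (1) α ∈ K if and only if S α = 0; (2) α is a nonzero element of P if and only if the pair (α, S α) is linearly independent and S (S α) lies in the span of {α, S α}; (3) α ∉ K and α ∉ P if and only if the triple (α, S α, S (S α)) is linearly independent; moreover in case (3) the vector S (S (S α)) always lies in the span of {α, S α, S (S α)}. -/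
noncomputable def minkB : LinearMap.BilinForm ℝ (Fin 4 → ℝ) :=
  LinearMap.mk₂ ℝ (fun x y => -(x 0 * y 0) + x 1 * y 1 + x 2 * y 2 + x 3 * y 3)
    (fun _ _ _ => by simp [Pi.add_apply]; ring)
    (fun _ _ _ => by simp [Pi.smul_apply, smul_eq_mul]; ring)
    (fun _ _ _ => by simp [Pi.add_apply]; ring)
    (fun _ _ _ => by simp [Pi.smul_apply, smul_eq_mul]; ring)

lemma minkB_apply (x y : Fin 4 → ℝ) :
    minkB x y = -(x 0 * y 0) + x 1 * y 1 + x 2 * y 2 + x 3 * y 3 := rfl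

lemma minkB_refl : minkB.IsRefl := fun x y h => by
  rw [minkB_apply] at h ⊢; linarith

lemma minkB_nondeg : minkB.Nondegenerate := by
  refine (LinearMap.IsRefl.nondegenerate_iff_separatingLeft minkB_refl).2 ?_
  intro x h
  have h0 := h ![1,0,0,0]
  have h1 := h ![0,1,0,0]
  have h2 := h ![0,0,1,0]
  have h3 := h ![0,0,0,1]
  simp [minkB_apply] at h0 h1 h2 h3
  funext i
  fin_cases i <;> simpa

/-- **Pointwise linear algebra of Theorem 2.** Characterization of vectors
tangent to, normal to, or oblique to the axis via iterates of the
skew-adjoint map `S = ∇σ`. -/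
theorem tangent_normal_oblique_characterization
    (η : (Fin 4 → ℝ) → (Fin 4 → ℝ) → ℝ)
    (hη : ∀ x y : Fin 4 → ℝ,
      η x y = -(x 0 * y 0) + x 1 * y 1 + x 2 * y 2 + x 3 * y 3)
    (S : (Fin 4 → ℝ) →ₗ[ℝ] (Fin 4 → ℝ))
    (hskew : ∀ x y : Fin 4 → ℝ, η (S x) y = -η x (S y))
    (K : Submodule ℝ (Fin 4 → ℝ)) (hK : K = LinearMap.ker S)
    (P : Set (Fin 4 → ℝ)) (hP : P = {v | ∀ k ∈ K, η v k = 0})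
    (hdim : Module.finrank ℝ K = 2)
    (hpos : ∀ p ∈ P, p ≠ 0 → 0 < η p p) :
    ∀ α : Fin 4 → ℝ,
      (α ∈ K ↔ S α = 0) ∧
      ((α ≠ 0 ∧ α ∈ P) ↔
        (LinearIndependent ℝ ![α, S α] ∧
          S (S α) ∈ Submodule.span ℝ {α, S α})) ∧
      ((α ∉ K ∧ α ∉ P) ↔ LinearIndependent ℝ ![α, S α, S (S α)]) ∧
      (α ∉ K → α ∉ P →
        S (S (S α)) ∈ Submodule.span ℝ {α, S α, S (S α)}) := by
  intro α
  have hsymm : ∀ x y, η x y = η y x := fun x y => by rw [hη, hη]; ring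
  have hηB : ∀ x y, η x y = minkB x y := fun x y => by rw [hη, minkB_apply]
  set P' : Submodule ℝ (Fin 4 → ℝ) := minkB.orthogonal K with hP'
  have hPP' : P = ↑P' := by
    rw [hP]
    ext v
    simp only [Set.mem_setOf_eq, SetLike.mem_coe, hP',
      LinearMap.BilinForm.mem_orthogonal_iff, LinearMap.BilinForm.IsOrtho]
    constructor
    · intro h n hn; rw [← hηB, hsymm]; exact h n hn
    · intro h k hk; rw [hsymm, hηB]; exact h k hk
  have hfinV : Module.finrank ℝ (Fin 4 → ℝ) = 4 := Module.finrank_fin_fun ℝ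
  have hfinP : Module.finrank ℝ P' = 2 := by
    rw [hP', LinearMap.BilinForm.finrank_orthogonal minkB_nondeg K, hfinV, hdim]
  have hposP : ∀ p ∈ P', p ≠ 0 → 0 < η p p := fun p hp =>
    hpos p (by rw [hPP']; exact hp)
  have hdisj : ∀ x, x ∈ K → x ∈ P' → x = 0 := by
    intro x hxK hxP
    by_contra hne
    have h0 : η x x = 0 := by rw [hηB]; exact hxP x hxK
    exact (hposP x hxP hne).ne' h0
  have hcod : K ⊔ P' = ⊤ := by
    apply Submodule.eq_top_of_finrank_eq
    have h1 := Submodule.finrank_sup_add_finrank_inf_eq K P'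
    have h2 : K ⊓ P' = ⊥ := by
      rw [eq_bot_iff]; intro x hx
      exact (Submodule.mem_bot _).2 (hdisj x hx.1 hx.2)
    rw [h2, finrank_bot, add_zero, hdim, hfinP] at h1
    rw [h1, hfinV]
  obtain ⟨k, hk, p, hp, hα⟩ := Submodule.mem_sup.1
    (show α ∈ K ⊔ P' by rw [hcod]; exact Submodule.mem_top)
  have hSk : S k = 0 := LinearMap.mem_ker.1 (hK ▸ hk)
  have hSα : S α = S p := by rw [← hα, map_add, hSk, zero_add]
  have hSP : ∀ q ∈ P', S q ∈ P' := by
    intro q hq n hn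
    have hSn : S n = 0 := LinearMap.mem_ker.1 (hK ▸ hn)
    have h0 : η q 0 = 0 := by rw [hη]; simp
    show minkB n (S q) = 0
    rw [← hηB, hsymm, hskew q n, hSn, h0, neg_zero]
  have hortho : ∀ x, η (S x) x = 0 := fun x => by
    have h1 := hskew x x
    have h2 := hsymm x (S x)
    linarith
  have hSne : ∀ q ∈ P', q ≠ 0 → S q ≠ 0 := by
    intro q hq hq0 hSq
    exact hq0 (hdisj q (by rw [hK, LinearMap.mem_ker]; exact hSq) hq)
  have hpair : ∀ q ∈ P', q ≠ 0 → LinearIndependent ℝ ![q, S q] := by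
    intro q hq hq0
    rw [LinearIndependent.pair_iff]
    intro s t hst
    have h1 : minkB (s • q + t • S q) q = 0 := by rw [hst]; simp
    simp only [map_add, LinearMap.add_apply, map_smul, LinearMap.smul_apply,
      smul_eq_mul] at h1
    have h2 : minkB (S q) q = 0 := by rw [← hηB]; exact hortho q
    have h3 : 0 < minkB q q := by rw [← hηB]; exact hposP q hq hq0
    rw [h2, mul_zero, add_zero] at h1
    have hs : s = 0 := by
      rcases mul_eq_zero.1 h1 with h | h
      · exact h
      · exact absurd h h3.ne'
    refine ⟨hs, ?_⟩
    rw [hs, zero_smul, zero_add] at hst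
    rcases smul_eq_zero.1 hst with h | h
    · exact h
    · exact absurd h (hSne q hq hq0)
  have hS2 : ∀ q ∈ P', q ≠ 0 → ∃ a : ℝ, S (S q) = a • q ∧ a < 0 := by
    intro q hq hq0
    have hSq := hSP q hq
    have hSSq := hSP _ hSq
    have hnli : ¬ LinearIndependent ℝ
        (![⟨q, hq⟩, ⟨S q, hSq⟩, ⟨S (S q), hSSq⟩] : Fin 3 → P') := by
      intro h
      have := h.fintype_card_le_finrank
      rw [hfinP] at this
      simp at this
    obtain ⟨g, hg, i, hi⟩ := Fintype.not_linearIndependent_iff.1 hnli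
    have hgV : g 0 • q + g 1 • S q + g 2 • S (S q) = 0 := by
      have := congrArg Subtype.val hg
      simpa [Fin.sum_univ_three] using this
    have h1 : minkB (g 0 • q + g 1 • S q + g 2 • S (S q)) (S q) = 0 := by
      rw [hgV]; simp
    simp only [map_add, LinearMap.add_apply, map_smul, LinearMap.smul_apply,
      smul_eq_mul] at h1
    have e1 : minkB q (S q) = 0 := by rw [← hηB, hsymm]; exact hortho q
    have e2 : minkB (S (S q)) (S q) = 0 := by rw [← hηB]; exact hortho (S q)
    have e3 : 0 < minkB (S q) (S q) := by
      rw [← hηB]; exact hposP _ hSq (hSne q hq hq0)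
    rw [e1, e2, mul_zero, mul_zero, zero_add, add_zero] at h1
    have hg1 : g 1 = 0 := by
      rcases mul_eq_zero.1 h1 with h | h
      · exact h
      · exact absurd h e3.ne'
    rw [hg1, zero_smul, add_zero] at hgV
    have hg2 : g 2 ≠ 0 := by
      intro h2
      rw [h2, zero_smul, add_zero] at hgV
      have hg0 : g 0 = 0 := by
        rcases smul_eq_zero.1 hgV with h | h
        · exact h
        · exact absurd h hq0
      apply hi
      fin_cases i
      · exact hg0
      · exact hg1
      · exact h2
    have hSSqeq : S (S q) = (-(g 0) / g 2) • q := by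
      apply smul_right_injective (Fin 4 → ℝ) hg2
      show g 2 • S (S q) = g 2 • ((-(g 0) / g 2) • q)
      rw [smul_smul]
      have : g 2 * (-(g 0) / g 2) = -(g 0) := by
        rw [mul_comm]; exact div_mul_cancel₀ _ hg2
      rw [this]
      have := eq_neg_of_add_eq_zero_right hgV
      rw [this, neg_smul]
    refine ⟨-(g 0) / g 2, hSSqeq, ?_⟩
    have h4 : minkB (S (S q)) q = -minkB (S q) (S q) := by
      rw [← hηB, ← hηB]; exact hskew (S q) q
    have h5 : minkB (S (S q)) q = (-(g 0) / g 2) * minkB q q := by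
      rw [hSSqeq]
      simp only [map_smul, LinearMap.smul_apply, smul_eq_mul]
    have h6 : 0 < minkB q q := by rw [← hηB]; exact hposP q hq hq0
    nlinarith
  refine ⟨by rw [hK]; exact LinearMap.mem_ker, ?_, ?_, ?_⟩
  · constructor
    · rintro ⟨hα0, hαP⟩
      have hαP' : α ∈ P' := by rw [hPP'] at hαP; exact hαP
      obtain ⟨a, ha, _⟩ := hS2 α hαP' hα0
      exact ⟨hpair α hαP' hα0, by
        rw [ha]
        exact Submodule.smul_mem _ a (Submodule.subset_span (Set.mem_insert _ _))⟩
    · rintro ⟨hli, hsp⟩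
      have hα0 : α ≠ 0 := by simpa using hli.ne_zero 0
      have hSα0 : S α ≠ 0 := by simpa using hli.ne_zero 1
      have hp0 : p ≠ 0 := by
        intro h
        apply hSα0
        rw [hSα, h, map_zero]
      obtain ⟨a, ha, haneg⟩ := hS2 p hp hp0
      have hSSα : S (S α) = a • p := by rw [hSα, ha]
      obtain ⟨c, d, hcd⟩ := Submodule.mem_span_pair.1 hsp
      rw [hSSα, hSα, ← hα] at hcd
      have heq : c • k = (a - c) • p + (-d) • S p := by
        linear_combination (norm := module) hcd
      have hck : c • k ∈ P' := by
        rw [heq]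
        exact add_mem (Submodule.smul_mem _ _ hp) (Submodule.smul_mem _ _ (hSP p hp))
      have hck0 : c • k = 0 := hdisj _ (Submodule.smul_mem _ _ hk) hck
      rw [hck0] at heq
      obtain ⟨h1, _⟩ := LinearIndependent.pair_iff.1 (hpair p hp hp0) (a - c) (-d) heq.symm
      have hc : c = a := by linarith
      have hk0 : k = 0 := by
        rcases smul_eq_zero.1 hck0 with h | h
        · exact absurd h (by rw [hc]; exact haneg.ne)
        · exact h
      refine ⟨hα0, ?_⟩
      rw [hPP']
      show α ∈ P'
      rw [← hα, hk0, zero_add]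
      exact hp
  · constructor
    · rintro ⟨hαK, hαP⟩
      have hp0 : p ≠ 0 := by
        intro h
        exact hαK (by rw [← hα, h, add_zero]; exact hk)
      have hk0 : k ≠ 0 := by
        intro h
        apply hαP
        rw [hPP']
        show α ∈ P'
        rw [← hα, h, zero_add]
        exact hp
      obtain ⟨a, ha, haneg⟩ := hS2 p hp hp0
      have hSSα : S (S α) = a • p := by rw [hSα, ha]
      rw [Fintype.linearIndependent_iff]
      intro g hg
      have hg' : g 0 • α + g 1 • S α + g 2 • S (S α) = 0 := by
        simpa [Fin.sum_univ_three] using hg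
      rw [hSSα, hSα, ← hα] at hg'
      have heq : g 0 • k = (-(g 0) - g 2 * a) • p + (-(g 1)) • S p := by
        linear_combination (norm := module) hg'
      have h1 : g 0 • k = 0 := by
        apply hdisj _ (Submodule.smul_mem _ _ hk)
        rw [heq]
        exact add_mem (Submodule.smul_mem _ _ hp) (Submodule.smul_mem _ _ (hSP p hp))
      have hg0 : g 0 = 0 := by
        rcases smul_eq_zero.1 h1 with h | h
        · exact h
        · exact absurd h hk0
      rw [h1] at heq
      obtain ⟨ha1, ha2⟩ := LinearIndependent.pair_iff.1 (hpair p hp hp0) _ _ heq.symm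
      have hg1 : g 1 = 0 := by linarith
      have hg2 : g 2 = 0 := by
        have hza : g 2 * a = 0 := by rw [hg0] at ha1; linarith
        rcases mul_eq_zero.1 hza with h | h
        · exact h
        · exact absurd h haneg.ne
      intro i
      fin_cases i
      · exact hg0
      · exact hg1
      · exact hg2
    · intro hli
      constructor
      · intro hαK
        have hS0 : S α = 0 := LinearMap.mem_ker.1 (hK ▸ hαK)
        have hne : S α ≠ 0 := by simpa using hli.ne_zero 1
        exact hne hS0
      · intro hαP
        have hαP' : α ∈ P' := by rw [hPP'] at hαP; exact hαP
        by_cases hα0 : α = 0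
        · have hne : α ≠ 0 := by simpa using hli.ne_zero 0
          exact hne hα0
        obtain ⟨a, ha, _⟩ := hS2 α hαP' hα0
        have h := Fintype.linearIndependent_iff.1 hli ![a, 0, -1] (by
          simp [Fin.sum_univ_three, ha]) 2
        have h2 : (![a, 0, -1] : Fin 3 → ℝ) 2 = -1 := rfl
        rw [h2] at h
        norm_num at h
  · intro hαK hαP
    have hp0 : p ≠ 0 := by
      intro h
      exact hαK (by rw [← hα, h, add_zero]; exact hk)
    obtain ⟨a, ha, _⟩ := hS2 p hp hp0
    have h3 : S (S (S α)) = a • S α := by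
      rw [hSα, ha, map_smul]
    rw [h3]
    refine Submodule.smul_mem _ a (Submodule.subset_span ?_)
    simp
end

section
/- Let E = EuclideanSpace ℝ (Fin n), let f : E → ℝ be C² (ContDiff ℝ 2 f), and let L be a linear subspace of E with orthogonal complement Lᗮ. Assume that for every q ∈ L one has f q = 0 and fderiv ℝ f q = 0, and that the second derivative is positive definite transversally: for every q ∈ L and every nonzero v ∈ Lᗮ, fderiv ℝ (fderiv ℝ f) q v v > 0. Then every q ∈ L has a neighbourhood N such that f x ≥ 0 for all x ∈ N, and f x = 0 for x ∈ N only if x ∈ L. -/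
open Filter Metric Set

set_option maxHeartbeats 1000000

/-- **Flat model of Property 4.** A `C²` function vanishing to second order on
a subspace `L` with transversally positive definite Hessian is nonnegative
near each point of `L` and vanishes near `L` only on `L`. -/
theorem nonneg_near_axis_of_transverse_positive_hessian
    (n : ℕ) (f : EuclideanSpace ℝ (Fin n) → ℝ)
    (hf : ContDiff ℝ 2 f)
    (L : Submodule ℝ (EuclideanSpace ℝ (Fin n)))
    (hf0 : ∀ q ∈ L, f q = 0)
    (hdf0 : ∀ q ∈ L, fderiv ℝ f q = 0)
    (hHess : ∀ q ∈ L, ∀ v ∈ Lᗮ, v ≠ 0 → 0 < fderiv ℝ (fderiv ℝ f) q v v) :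
    ∀ q ∈ L, ∃ N ∈ nhds q,
      (∀ x ∈ N, 0 ≤ f x) ∧ (∀ x ∈ N, f x = 0 → x ∈ L) := by
  intro q hq
  by_cases hLtop : L = ⊤
  · refine ⟨Set.univ, univ_mem, fun x _ => ?_, fun x _ _ => ?_⟩
    · exact le_of_eq (hf0 x (by simp [hLtop])).symm
    · simp [hLtop]
  -- notation for the Hessian
  set H : EuclideanSpace ℝ (Fin n) →
      EuclideanSpace ℝ (Fin n) →L[ℝ] EuclideanSpace ℝ (Fin n) →L[ℝ] ℝ :=
    fderiv ℝ (fderiv ℝ f) with hH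
  have hf1 : ContDiff ℝ 1 (fderiv ℝ f) := hf.fderiv_right (by norm_num)
  have hfdiff : Differentiable ℝ f := hf.differentiable (by norm_num)
  have hf1diff : Differentiable ℝ (fderiv ℝ f) := hf1.differentiable (by norm_num)
  have hHcont : Continuous H := hf1.continuous_fderiv (by norm_num)
  -- the compact set of unit vectors in Lᗮ
  have hLbot : Lᗮ ≠ ⊥ := fun h => hLtop (Submodule.orthogonal_eq_bot_iff.mp h)
  obtain ⟨w, hwmem, hw0⟩ := Submodule.exists_mem_ne_zero_of_ne_bot hLbot
  set S : Set (EuclideanSpace ℝ (Fin n)) := sphere (0 : EuclideanSpace ℝ (Fin n)) 1 ∩ Lᗮ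
  have hScomp : IsCompact S :=
    (isCompact_sphere 0 1).inter_right (Submodule.closed_of_finiteDimensional Lᗮ)
  have hSne : S.Nonempty := by
    refine ⟨‖w‖⁻¹ • w, ?_, Submodule.smul_mem _ _ hwmem⟩
    simp [norm_smul, norm_ne_zero_iff.mpr hw0, inv_mul_cancel₀ (norm_ne_zero_iff.mpr hw0)]
  have hφcont : ContinuousOn (fun v => H q v v) S := by
    fun_prop
  obtain ⟨v₀, hv₀S, hv₀min⟩ := hScomp.exists_isMinOn hSne hφcont
  set c : ℝ := H q v₀ v₀ with hc
  have hv₀1 : ‖v₀‖ = 1 := by simpa using hv₀S.1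
  have hcpos : 0 < c :=
    hHess q hq v₀ hv₀S.2 (by intro h; rw [h] at hv₀1; simp at hv₀1)
  -- quadratic lower bound at q
  have hquad : ∀ v ∈ Lᗮ, c * ‖v‖ ^ 2 ≤ H q v v := by
    intro v hv
    rcases eq_or_ne v 0 with rfl | hv0
    · simp
    · have hn : ‖v‖ ≠ 0 := norm_ne_zero_iff.mpr hv0
      have hu : (‖v‖⁻¹ • v) ∈ S := by
        refine ⟨?_, Submodule.smul_mem _ _ hv⟩
        simp [norm_smul, inv_mul_cancel₀ hn]
      have := hv₀min hu
      have hexp : H q (‖v‖⁻¹ • v) (‖v‖⁻¹ • v) = ‖v‖⁻¹ * ‖v‖⁻¹ * H q v v := by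
        simp [mul_assoc]
      have h1 : c ≤ ‖v‖⁻¹ * ‖v‖⁻¹ * H q v v := by
        have h0 : H q v₀ v₀ ≤ H q (‖v‖⁻¹ • v) (‖v‖⁻¹ • v) := this
        rw [hexp] at h0
        exact hc ▸ h0
      have h2 : c * (‖v‖ * ‖v‖) ≤ ‖v‖⁻¹ * ‖v‖⁻¹ * H q v v * (‖v‖ * ‖v‖) := by
        nlinarith [sq_nonneg ‖v‖]
      calc c * ‖v‖ ^ 2 = c * (‖v‖ * ‖v‖) := by ring
        _ ≤ ‖v‖⁻¹ * ‖v‖⁻¹ * H q v v * (‖v‖ * ‖v‖) := h2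
        _ = H q v v := by field_simp
  -- continuity: radius r where Hessian stays close to H q
  obtain ⟨r, hr, hball⟩ : ∃ r > 0, ∀ y ∈ ball q r, ‖H y - H q‖ < c / 2 := by
    have hev : ∀ᶠ y in nhds q, dist (H y) (H q) < c / 2 :=
      Metric.tendsto_nhds.mp (hHcont.tendsto q) (c / 2) (by linarith)
    obtain ⟨r, hr, hsub⟩ := Metric.eventually_nhds_iff_ball.mp hev
    exact ⟨r, hr, fun y hy => by convert hsub y hy using 1; exact (dist_eq_norm (H y) (H q)).symm⟩
  -- quadratic lower bound on the ball
  have hquad' : ∀ y ∈ ball q r, ∀ v ∈ Lᗮ, c / 2 * ‖v‖ ^ 2 ≤ H y v v := by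
    intro y hy v hv
    have h1 : |H y v v - H q v v| ≤ c / 2 * ‖v‖ ^ 2 := by
      have heq : H y v v - H q v v = (H y - H q) v v := by
        rw [ContinuousLinearMap.sub_apply, ContinuousLinearMap.sub_apply]
      rw [heq]
      calc |(H y - H q) v v| = ‖(H y - H q) v v‖ := rfl
        _ ≤ ‖(H y - H q) v‖ * ‖v‖ := ((H y - H q) v).le_opNorm v
        _ ≤ ‖H y - H q‖ * ‖v‖ * ‖v‖ :=
            mul_le_mul_of_nonneg_right ((H y - H q).le_opNorm v) (norm_nonneg v)
        _ ≤ c / 2 * ‖v‖ * ‖v‖ := by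
            have h3 := (hball y hy).le
            nlinarith [mul_nonneg (norm_nonneg v) (norm_nonneg v)]
        _ = c / 2 * ‖v‖ ^ 2 := by ring
    have h2 := hquad v hv
    have := abs_le.mp h1
    linarith [this.1]
  -- the neighbourhood
  refine ⟨ball q (r / 4), ball_mem_nhds q (by linarith), ?_⟩
  -- decompose points near q
  have key : ∀ x ∈ ball q (r / 4), x ∉ L → 0 < f x := by
    intro x hx hxL
    set p : EuclideanSpace ℝ (Fin n) := (Submodule.orthogonalProjection L x : EuclideanSpace ℝ (Fin n))
      with hp
    have hpL : p ∈ L := (Submodule.orthogonalProjection L x).2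
    set v : EuclideanSpace ℝ (Fin n) := x - p with hvdef
    have hvmem : v ∈ Lᗮ := L.sub_starProjection_mem_orthogonal x
    have hv0 : v ≠ 0 := by
      intro h
      apply hxL
      have : x = p := by
        have := sub_eq_zero.mp h
        exact this
      rw [this]; exact hpL
    have hqproj : (Submodule.orthogonalProjection L q : EuclideanSpace ℝ (Fin n)) = q :=
      L.starProjection_eq_self_iff.mpr hq
    have hpq : ‖p - q‖ ≤ ‖x - q‖ := by
      have h1 : p - q = ((Submodule.orthogonalProjection L (x - q) : L) : EuclideanSpace ℝ (Fin n)) := by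
        rw [map_sub, Submodule.coe_sub, hqproj]
      rw [h1]
      calc ‖((Submodule.orthogonalProjection L (x - q) : L) : EuclideanSpace ℝ (Fin n))‖
          = ‖Submodule.orthogonalProjection L (x - q)‖ := rfl
        _ ≤ ‖Submodule.orthogonalProjection L‖ * ‖x - q‖ := (Submodule.orthogonalProjection L).le_opNorm _
        _ ≤ 1 * ‖x - q‖ :=
            mul_le_mul_of_nonneg_right (Submodule.orthogonalProjection_norm_le L) (norm_nonneg _)
        _ = ‖x - q‖ := one_mul _
    have hxq : ‖x - q‖ < r / 4 := by rwa [mem_ball, dist_eq_norm] at hx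
    have hvle : ‖v‖ ≤ 2 * ‖x - q‖ := by
      have hveq : v = (x - q) - (p - q) := by rw [hvdef]; abel
      rw [hveq]
      calc ‖(x - q) - (p - q)‖ ≤ ‖x - q‖ + ‖p - q‖ := norm_sub_le _ _
        _ ≤ 2 * ‖x - q‖ := by linarith
    have hmem : ∀ t ∈ Icc (0:ℝ) 1, p + t • v ∈ ball q r := by
      intro t ht
      rw [mem_ball, dist_eq_norm]
      have heq : p + t • v - q = (p - q) + t • v := by abel
      rw [heq]
      have ht1 : |t| ≤ 1 := abs_le.mpr ⟨by linarith [ht.1], ht.2⟩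
      calc ‖(p - q) + t • v‖ ≤ ‖p - q‖ + ‖t • v‖ := norm_add_le _ _
        _ = ‖p - q‖ + |t| * ‖v‖ := by rw [norm_smul, Real.norm_eq_abs]
        _ ≤ ‖x - q‖ + 1 * ‖v‖ := by
            have := norm_nonneg v
            gcongr
        _ ≤ ‖x - q‖ + 2 * ‖x - q‖ := by linarith
        _ < r := by linarith
    -- the one-dimensional restrictions
    set g : ℝ → ℝ := fun t => f (p + t • v) with hg
    set g1 : ℝ → ℝ := fun t => fderiv ℝ f (p + t • v) v with hg1def
    have hcurve : ∀ t : ℝ, HasDerivAt (fun s : ℝ => p + s • v) v t := by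
      intro t
      simpa using ((hasDerivAt_id t).smul_const v).const_add p
    have hgd : ∀ t : ℝ, HasDerivAt g (g1 t) t := fun t =>
      (hfdiff (p + t • v)).hasFDerivAt.comp_hasDerivAt t (hcurve t)
    have hg1d : ∀ t : ℝ, HasDerivAt g1 (H (p + t • v) v v) t := by
      intro t
      have h1 : HasDerivAt (fun s : ℝ => fderiv ℝ f (p + s • v)) (H (p + t • v) v) t :=
        (hf1diff (p + t • v)).hasFDerivAt.comp_hasDerivAt t (hcurve t)
      exact (ContinuousLinearMap.apply ℝ ℝ v).hasFDerivAt.comp_hasDerivAt t h1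
    have hδ : 0 < c / 2 * ‖v‖ ^ 2 := by
      have : 0 < ‖v‖ := norm_pos_iff.mpr hv0
      positivity
    -- g1 is strictly monotone on [0,1]
    have hg1mono : StrictMonoOn g1 (Icc (0:ℝ) 1) := by
      apply strictMonoOn_of_deriv_pos (convex_Icc 0 1)
      · exact fun t _ => (hg1d t).continuousAt.continuousWithinAt
      · intro t ht
        rw [interior_Icc] at ht
        rw [(hg1d t).deriv]
        have := hquad' (p + t • v) (hmem t ⟨ht.1.le, ht.2.le⟩) v hvmem
        linarith
    have hg10 : g1 0 = 0 := by
      have : p + (0:ℝ) • v = p := by simp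
      rw [hg1def]
      simp only [this]
      rw [hdf0 p hpL]
      rfl
    have hg1pos : ∀ t ∈ Ioo (0:ℝ) 1, 0 < g1 t := by
      intro t ht
      have := hg1mono (left_mem_Icc.mpr zero_le_one) ⟨ht.1.le, ht.2.le⟩ ht.1
      rwa [hg10] at this
    -- g is strictly monotone on [0,1]
    have hgmono : StrictMonoOn g (Icc (0:ℝ) 1) := by
      apply strictMonoOn_of_deriv_pos (convex_Icc 0 1)
      · exact fun t _ => (hgd t).continuousAt.continuousWithinAt
      · intro t ht
        rw [interior_Icc] at ht
        rw [(hgd t).deriv]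
        exact hg1pos t ht
    have h01 := hgmono (left_mem_Icc.mpr zero_le_one) (right_mem_Icc.mpr zero_le_one)
      zero_lt_one
    have hg0 : g 0 = 0 := by
      have : p + (0:ℝ) • v = p := by simp
      rw [hg]; simp only [this]; exact hf0 p hpL
    have hgx : g 1 = f x := by
      have h1 : p + (1:ℝ) • v = x := by rw [one_smul, hvdef]; abel
      show f (p + (1:ℝ) • v) = f x
      rw [h1]
    rw [← hgx, ← hg0]
    exact h01
  constructor
  · intro x hx
    by_cases hxL : x ∈ L
    · exact le_of_eq (hf0 x hxL).symm
    · exact (key x hx hxL).le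
  · intro x hx hfx
    by_contra hxL
    exact absurd hfx (ne_of_gt (key x hx hxL))
end

section
/- Let E = EuclideanSpace ℝ (Fin n), let f : E → ℝ be C² (ContDiff ℝ 2 f), and let L be a linear subspace of E with orthogonal complement Lᗮ. Assume that for every q ∈ L one has f q = 0 and fderiv ℝ f q = 0, and that for every q ∈ L and all v ∈ Lᗮ the second derivative satisfies fderiv ℝ (fderiv ℝ f) q v v = 2 * ‖v‖^2. Then for every q ∈ L, the function x ↦ ‖gradient f x‖^2 / (4 * f x) tends to 1 as x tends to q within the complement of L (i.e. along the filter 𝓝[Lᶜ] q). -/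
open Filter Topology

private lemma ratio_bound {a s c ε : ℝ} (hε : 0 < ε) (hεhalf : ε ≤ 1 / 2) (hs : 0 < s)
    (ha0 : 0 ≤ a) (ha : |a - 2 * s| ≤ ε * s) (hc : |c - s ^ 2| ≤ ε * s ^ 2) :
    |a ^ 2 / (4 * c) - 1| ≤ 5 * ε := by
  obtain ⟨ha1, ha2⟩ := abs_le.mp ha
  obtain ⟨hc1, hc2⟩ := abs_le.mp hc
  have hal : (2 - ε) * s ≤ a := by nlinarith
  have hau : a ≤ (2 + ε) * s := by nlinarith
  have hcl : (1 - ε) * s ^ 2 ≤ c := by nlinarith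
  have hcu : c ≤ (1 + ε) * s ^ 2 := by nlinarith
  have hss : 0 < s ^ 2 := by positivity
  have hc0 : 0 < c := by nlinarith [mul_nonneg (by linarith : (0:ℝ) ≤ 1 / 2 - ε) hss.le]
  have h4c : 0 < 4 * c := by linarith
  have haa1 : ((2 - ε) * s) * ((2 - ε) * s) ≤ a * a :=
    mul_self_le_mul_self (by nlinarith) hal
  have haa2 : a * a ≤ ((2 + ε) * s) * ((2 + ε) * s) := mul_self_le_mul_self ha0 hau
  rw [abs_le]
  constructor
  · have hkey2 : (1 - 5 * ε) * (4 * c) ≤ a ^ 2 := by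
      rcases le_or_gt (1 - 5 * ε) 0 with h | h
      · nlinarith [sq_nonneg a, mul_nonneg (neg_nonneg.mpr h) hc0.le]
      · nlinarith [mul_nonneg h.le (by linarith : (0:ℝ) ≤ (1 + ε) * s ^ 2 - c),
          mul_nonneg (mul_nonneg hε.le hε.le) hss.le, mul_nonneg hε.le hss.le]
    have h2 : 1 - 5 * ε ≤ a ^ 2 / (4 * c) := by
      rw [le_div_iff₀ h4c]; exact hkey2
    linarith
  · have hkey2 : a ^ 2 ≤ (1 + 5 * ε) * (4 * c) := by
      nlinarith [mul_nonneg (by linarith : (0:ℝ) ≤ 1 + 5 * ε) (by linarith : (0:ℝ) ≤ c - (1 - ε) * s ^ 2),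
        mul_nonneg (mul_nonneg hε.le (by linarith : (0:ℝ) ≤ 1 / 2 - ε)) hss.le,
        mul_nonneg hε.le hss.le]
    have h2 : a ^ 2 / (4 * c) ≤ 1 + 5 * ε := by
      rw [div_le_iff₀ h4c]; exact hkey2
    linarith

set_option maxHeartbeats 2000000 in
/-- **Flat model of Property 5 (elementary flatness).** If a `C²` function `f`
vanishes to second order on a subspace `L` and its Hessian there is twice the
squared norm on the normal directions, then `‖∇f‖² / (4 f) → 1` at points of
`L`, approaching within the complement of `L`. -/
theorem regularity_condition_at_axis
    (n : ℕ) (f : EuclideanSpace ℝ (Fin n) → ℝ)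
    (hf : ContDiff ℝ 2 f)
    (L : Submodule ℝ (EuclideanSpace ℝ (Fin n)))
    (hf0 : ∀ q ∈ L, f q = 0)
    (hdf0 : ∀ q ∈ L, fderiv ℝ f q = 0)
    (hHess : ∀ q ∈ L, ∀ v ∈ Lᗮ, fderiv ℝ (fderiv ℝ f) q v v = 2 * ‖v‖ ^ 2) :
    ∀ q ∈ L,
      Tendsto (fun x => ‖gradient f x‖ ^ 2 / (4 * f x))
        (𝓝[(L : Set (EuclideanSpace ℝ (Fin n)))ᶜ] q) (𝓝 1) := by
  intro q hq
  have hf_diff : Differentiable ℝ f := hf.differentiable (by norm_num)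
  have hg : ContDiff ℝ 1 (fderiv ℝ f) := hf.fderiv_right (by norm_num)
  have hg_diff : Differentiable ℝ (fderiv ℝ f) := hg.differentiable (by norm_num)
  set H := fderiv ℝ (fderiv ℝ f) with hH
  have hH_cont : Continuous H := hg.continuous_fderiv (by norm_num)
  -- symmetry of second derivative
  have hsymm : ∀ p : EuclideanSpace ℝ (Fin n), ∀ v w, H p v w = H p w v := by
    intro p v w
    exact (hf.contDiffAt.isSymmSndFDerivAt (by simp)) v w
  -- the second derivative vanishes in directions along L, at points of L
  have hHL : ∀ p ∈ L, ∀ v ∈ L, H p v = 0 := by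
    intro p hp v hv
    have hc : HasDerivAt (fun t : ℝ => p + t • v) v 0 := by
      simpa using ((hasDerivAt_id (0 : ℝ)).smul_const v).const_add p
    have hgq : HasFDerivAt (fderiv ℝ f) (H p) (p + (0 : ℝ) • v) := by
      simpa using (hg_diff p).hasFDerivAt
    have h0 : HasDerivAt (fun t : ℝ => fderiv ℝ f (p + t • v)) (H p v) 0 := by
      exact hgq.comp_hasDerivAt 0 hc
    have hconst : (fun t : ℝ => fderiv ℝ f (p + t • v))
        = fun _ => (0 : EuclideanSpace ℝ (Fin n) →L[ℝ] ℝ) := by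
      funext t
      exact hdf0 _ (L.add_mem hp (L.smul_mem _ hv))
    rw [hconst] at h0
    exact ((hasDerivAt_const (0 : ℝ)
      (0 : EuclideanSpace ℝ (Fin n) →L[ℝ] ℝ)).unique h0).symm
  -- polarization on the orthogonal complement
  have hHorth : ∀ p ∈ L, ∀ v ∈ Lᗮ, ∀ w ∈ Lᗮ,
      H p v w = 2 * (inner ℝ v w : ℝ) := by
    intro p hp v hv w hw
    have h1 := hHess p hp v hv
    have h2 := hHess p hp w hw
    have h3 := hHess p hp (v + w) (Submodule.add_mem _ hv hw)
    have hsym := hsymm p v w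
    have hexp : H p (v + w) (v + w) = H p v v + H p v w + H p w v + H p w w := by
      simp only [map_add, ContinuousLinearMap.add_apply]
      ring
    have hpol : ‖v + w‖ ^ 2 = ‖v‖ ^ 2 + 2 * (inner ℝ v w : ℝ) + ‖w‖ ^ 2 :=
      norm_add_sq_real v w
    rw [hexp, hpol] at h3
    linarith
  -- the key identity: for w ∈ Lᗮ and p ∈ L, H p w is the functional ⟪2w, ·⟫
  have hkey : ∀ p ∈ L, ∀ w ∈ Lᗮ, H p w = innerSL ℝ ((2 : ℝ) • w) := by
    intro p hp w hw
    ext v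
    have hv1 : ((Submodule.orthogonalProjection L v : EuclideanSpace ℝ (Fin n))) ∈ L :=
      SetLike.coe_mem _
    have hv2 : v - Submodule.orthogonalProjection L v ∈ Lᗮ :=
      Submodule.sub_starProjection_mem_orthogonal v
    have e1 : H p w ((Submodule.orthogonalProjection L v : EuclideanSpace ℝ (Fin n))) = 0 := by
      rw [hsymm p w _, hHL p hp _ hv1]
      rfl
    have e2 : H p w (v - Submodule.orthogonalProjection L v)
        = 2 * (inner ℝ w (v - Submodule.orthogonalProjection L v) : ℝ) := hHorth p hp w hw _ hv2
    have e3 : (inner ℝ w ((Submodule.orthogonalProjection L v : EuclideanSpace ℝ (Fin n))) : ℝ) = 0 := by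
      rw [real_inner_comm]
      exact (Submodule.mem_orthogonal _ _).1 hw _ hv1
    have hv : ((Submodule.orthogonalProjection L v : EuclideanSpace ℝ (Fin n)))
        + (v - Submodule.orthogonalProjection L v) = v := by abel
    calc H p w v
        = H p w (((Submodule.orthogonalProjection L v : EuclideanSpace ℝ (Fin n)))
            + (v - Submodule.orthogonalProjection L v)) := by rw [hv]
      _ = 2 * (inner ℝ w v : ℝ) := by
          rw [map_add, e1, e2, inner_sub_right, e3]
          ring
      _ = innerSL ℝ ((2 : ℝ) • w) v := by
          rw [innerSL_apply_apply, real_inner_smul_left]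
  -- start the ε-δ argument
  rw [Metric.tendsto_nhdsWithin_nhds]
  intro ε' hε'
  set ε : ℝ := min (ε' / 6) (1 / 2) with hεdef
  have hε : 0 < ε := lt_min (by linarith) (by norm_num)
  have hεhalf : ε ≤ 1 / 2 := min_le_right _ _
  have hε6 : 6 * ε ≤ ε' := by
    have := min_le_left (ε' / 6) (1 / 2)
    have : ε ≤ ε' / 6 := this
    linarith
  obtain ⟨δ₀, hδ₀pos, hδ₀⟩ := (Metric.continuousAt_iff (α := EuclideanSpace ℝ (Fin n)) (β := EuclideanSpace ℝ (Fin n) →L[ℝ] EuclideanSpace ℝ (Fin n) →L[ℝ] ℝ)).mp (hH_cont.continuousAt (x := q)) ε hε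
  refine ⟨δ₀ / 2, by linarith, ?_⟩
  intro x hxL hxq
  rw [dist_eq_norm] at hxq
  -- the orthogonal decomposition of x relative to L
  set px : EuclideanSpace ℝ (Fin n) := (Submodule.orthogonalProjection L x : EuclideanSpace ℝ (Fin n))
    with hpx
  have hpxL : px ∈ L := SetLike.coe_mem _
  set wx : EuclideanSpace ℝ (Fin n) := x - px with hwxdef
  have hwxO : wx ∈ Lᗮ := Submodule.sub_starProjection_mem_orthogonal x
  have hwx0 : wx ≠ 0 := by
    intro h
    apply hxL
    have hx : x = px := by rwa [hwxdef, sub_eq_zero] at h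
    rw [hx]
    exact hpxL
  have hs : 0 < ‖wx‖ := norm_pos_iff.mpr hwx0
  -- Pythagoras : ‖x - q‖² = ‖px - q‖² + ‖wx‖²
  have hdec : x - q = (px - q) + wx := by rw [hwxdef]; abel
  have horth : (inner ℝ (px - q) wx : ℝ) = 0 :=
    (Submodule.mem_orthogonal _ _).1 hwxO _ (Submodule.sub_mem _ hpxL hq)
  have hpyth : ‖x - q‖ ^ 2 = ‖px - q‖ ^ 2 + ‖wx‖ ^ 2 := by
    rw [hdec, norm_add_sq_real, horth]
    ring
  have hwx_le : ‖wx‖ ≤ ‖x - q‖ := by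
    nlinarith [norm_nonneg wx, norm_nonneg (px - q), norm_nonneg (x - q)]
  have hpx_le : ‖px - q‖ ≤ ‖x - q‖ := by
    nlinarith [norm_nonneg wx, norm_nonneg (px - q), norm_nonneg (x - q)]
  have hx_ball : x ∈ Metric.ball q δ₀ := by
    rw [Metric.mem_ball, dist_eq_norm]
    linarith
  have hpx_ball : px ∈ Metric.ball q δ₀ := by
    rw [Metric.mem_ball, dist_eq_norm]
    linarith
  -- gradient estimate within the ball, relative to a base point in L
  have grad_est : ∀ y ∈ Metric.ball q δ₀, ∀ p ∈ L, p ∈ Metric.ball q δ₀ →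
      ‖fderiv ℝ f y - H q (y - p)‖ ≤ ε * ‖y - p‖ := by
    intro y hy p hp hpball
    have hmvt := Convex.norm_image_sub_le_of_norm_hasFDerivWithin_le
      (f := fun z => fderiv ℝ f z - H q z) (f' := fun z => H z - H q)
      (fun z _ => (((hg_diff z).hasFDerivAt).sub ((H q).hasFDerivAt)).hasFDerivWithinAt)
      (fun z hz => by
        have hz' : dist (H z) (H q) < ε := hδ₀ (Metric.mem_ball.mp hz)
        exact le_of_lt (by rw [← dist_eq_norm]; exact hz'))
      (convex_ball q δ₀) hpball hy
    have heq : fderiv ℝ f y - H q (y - p)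
        = (fderiv ℝ f y - H q y) - (fderiv ℝ f p - H q p) := by
      rw [hdf0 p hp, map_sub]
      abel
    rw [heq]
    exact hmvt
  -- gradient estimate at x
  have hge : ‖fderiv ℝ f x - H q wx‖ ≤ ε * ‖wx‖ := by
    have := grad_est x hx_ball px hpxL hpx_ball
    rwa [← hwxdef] at this
  have hHq_norm : ‖H q wx‖ = 2 * ‖wx‖ := by
    rw [hkey q hq wx hwxO, innerSL_apply_norm, norm_smul]
    simp
  have ha : |‖fderiv ℝ f x‖ - 2 * ‖wx‖| ≤ ε * ‖wx‖ := by
    calc |‖fderiv ℝ f x‖ - 2 * ‖wx‖| = |‖fderiv ℝ f x‖ - ‖H q wx‖| := by rw [hHq_norm]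
      _ ≤ ‖fderiv ℝ f x - H q wx‖ := abs_norm_sub_norm_le _ _
      _ ≤ ε * ‖wx‖ := hge
  -- value estimate along the segment from px to x
  have hc : ∀ t : ℝ, HasDerivAt (fun t : ℝ => px + t • wx) wx t := by
    intro t
    simpa using ((hasDerivAt_id t).smul_const wx).const_add px
  have hF : ∀ t : ℝ, HasDerivAt (fun t : ℝ => f (px + t • wx) - t ^ 2 * ‖wx‖ ^ 2)
      (fderiv ℝ f (px + t • wx) wx - 2 * t * ‖wx‖ ^ 2) t := by
    intro t
    have h1 : HasDerivAt (fun t : ℝ => f (px + t • wx)) (fderiv ℝ f (px + t • wx) wx) t :=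
      (hf_diff _).hasFDerivAt.comp_hasDerivAt t (hc t)
    have h2 : HasDerivAt (fun t : ℝ => t ^ 2 * ‖wx‖ ^ 2) (2 * t * ‖wx‖ ^ 2) t := by
      simpa [pow_one, mul_assoc] using (hasDerivAt_pow 2 t).mul_const (‖wx‖ ^ 2)
    exact h1.sub h2
  have hmem : ∀ t ∈ Set.Icc (0 : ℝ) 1, px + t • wx ∈ Metric.ball q δ₀ := by
    intro t ht
    have hrw : px + t • wx - q = (px - q) + t • wx := by abel
    rw [Metric.mem_ball, dist_eq_norm, hrw]
    have htw : ‖t • wx‖ ≤ ‖wx‖ := by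
      rw [norm_smul, Real.norm_eq_abs]
      have : |t| ≤ 1 := abs_le.mpr ⟨by linarith [ht.1], ht.2⟩
      nlinarith [norm_nonneg wx]
    calc ‖(px - q) + t • wx‖ ≤ ‖px - q‖ + ‖t • wx‖ := norm_add_le _ _
      _ ≤ ‖x - q‖ + ‖wx‖ := by linarith
      _ ≤ 2 * ‖x - q‖ := by linarith
      _ < δ₀ := by linarith
  have hbound : ∀ t ∈ Set.Icc (0 : ℝ) 1,
      ‖fderiv ℝ f (px + t • wx) wx - 2 * t * ‖wx‖ ^ 2‖ ≤ ε * ‖wx‖ ^ 2 := by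
    intro t ht
    have hy := hmem t ht
    have hgrad := grad_est (px + t • wx) hy px hpxL hpx_ball
    have hsub : px + t • wx - px = t • wx := by abel
    rw [hsub] at hgrad
    have happ : fderiv ℝ f (px + t • wx) wx - 2 * t * ‖wx‖ ^ 2
        = (fderiv ℝ f (px + t • wx) - H q (t • wx)) wx := by
      rw [ContinuousLinearMap.sub_apply, map_smul, ContinuousLinearMap.smul_apply,
        hHess q hq wx hwxO]
      simp [smul_eq_mul]
      ring
    rw [happ]
    calc ‖(fderiv ℝ f (px + t • wx) - H q (t • wx)) wx‖
        ≤ ‖fderiv ℝ f (px + t • wx) - H q (t • wx)‖ * ‖wx‖ :=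
          ContinuousLinearMap.le_opNorm _ _
      _ ≤ (ε * ‖t • wx‖) * ‖wx‖ := by
          exact mul_le_mul_of_nonneg_right hgrad (norm_nonneg _)
      _ ≤ ε * ‖wx‖ ^ 2 := by
          have htw : ‖t • wx‖ ≤ ‖wx‖ := by
            rw [norm_smul, Real.norm_eq_abs]
            have : |t| ≤ 1 := abs_le.mpr ⟨by linarith [ht.1], ht.2⟩
            nlinarith [norm_nonneg wx]
          have h2 := mul_le_mul_of_nonneg_left
            (mul_le_mul_of_nonneg_right htw (norm_nonneg wx)) hε.le
          nlinarith [h2]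
  have hval : |f x - ‖wx‖ ^ 2| ≤ ε * ‖wx‖ ^ 2 := by
    have hmvt := (convex_Icc (0 : ℝ) 1).norm_image_sub_le_of_norm_hasDerivWithin_le
      (f := fun t : ℝ => f (px + t • wx) - t ^ 2 * ‖wx‖ ^ 2)
      (f' := fun t : ℝ => fderiv ℝ f (px + t • wx) wx - 2 * t * ‖wx‖ ^ 2)
      (fun t _ => (hF t).hasDerivWithinAt) hbound
      (Set.mem_Icc.mpr ⟨le_refl 0, zero_le_one⟩) (Set.mem_Icc.mpr ⟨zero_le_one, le_refl 1⟩)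
    have hx' : px + wx = x := by rw [hwxdef]; abel
    simp only [one_smul, zero_smul, add_zero, one_pow, hx', hf0 px hpxL,
      Real.norm_eq_abs] at hmvt
    have hgoal : |f x - ‖wx‖ ^ 2| = |f x - 1 * ‖wx‖ ^ 2 - (0 - 0 ^ 2 * ‖wx‖ ^ 2)| := by
      norm_num
    rw [hgoal]
    calc |f x - 1 * ‖wx‖ ^ 2 - (0 - 0 ^ 2 * ‖wx‖ ^ 2)|
        ≤ ε * ‖wx‖ ^ 2 * |1 - 0| := by
          simpa [Real.norm_eq_abs] using hmvt
      _ = ε * ‖wx‖ ^ 2 := by norm_num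
  -- final arithmetic
  have hgradnorm : ‖gradient f x‖ = ‖fderiv ℝ f x‖ := by
    show ‖(InnerProductSpace.toDual ℝ _).symm (fderiv ℝ f x)‖ = ‖fderiv ℝ f x‖
    exact LinearIsometryEquiv.norm_map _ _
  rw [Real.dist_eq, hgradnorm]
  have hmain := ratio_bound hε hεhalf hs (norm_nonneg _) ha hval
  calc |‖fderiv ℝ f x‖ ^ 2 / (4 * f x) - 1| ≤ 5 * ε := hmain
    _ < 6 * ε := by linarith
    _ ≤ ε' := hε6
end
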